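/- arXiv:2110.05826 — 4 statements merged into one kernel-verified Lean document; each statement's English description precedes it below -/
import Mathlib

section
/- Flexible symmetrization: let t > 0 and a ∈ (0,1) be such that 4(1−a)² n t² ≥ 2. Then P( sup_{A ∈ 𝒜} (μ_n(A) − μ(A)) ≥ t ) ≤ 2·P( sup_{A ∈ 𝒜} (μ_n(A) − μ_n'(A)) ≥ a t ), and likewise P( sup_{A ∈ 𝒜} (μ(A) − μ_n(A)) ≥ t ) ≤ 2·P( sup_{A ∈ 𝒜} (μ_n(A) − μ_n'(A)) ≥ a t ). -/
open MeasureTheory ProbabilityTheory Set Filter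
open scoped ENNReal NNReal BigOperators Topology

noncomputable section

/-- The shattering coefficient `S_𝒜(m)` of a class of sets `𝒜` in `ℝ^d`. -/
def shatterCoeff {d : ℕ} (𝒜 : Set (Set (Fin d → ℝ))) (m : ℕ) : ℕ :=
  ⨆ x : Fin m → (Fin d → ℝ), ((fun A => A ∩ Set.range x) '' 𝒜).ncard

/-- A class of sets is pointwise measurable if it admits an at most countable subclass
`𝒜₀` such that every indicator of a set in `𝒜` is a pointwise limit of indicators of
sets of `𝒜₀`. -/
def PointwiseMeasurable {d : ℕ} (𝒜 : Set (Set (Fin d → ℝ))) : Prop :=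
  ∃ 𝒜₀ ⊆ 𝒜, 𝒜₀.Countable ∧ ∀ A ∈ 𝒜, ∃ B : ℕ → Set (Fin d → ℝ),
    (∀ m, B m ∈ 𝒜₀) ∧ ∀ x : Fin d → ℝ,
      Filter.Tendsto (fun m => (B m).indicator (fun _ => (1:ℝ)) x)
        Filter.atTop (nhds (A.indicator (fun _ => (1:ℝ)) x))

/-- The empirical measure `μ_n(A)` of the sample `X_1, …, X_n` evaluated at `A`. -/
def empMeas {Ω : Type*} {d n : ℕ} (X : Fin n → Ω → (Fin d → ℝ)) (ω : Ω)
    (A : Set (Fin d → ℝ)) : ℝ :=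
  (∑ i : Fin n, A.indicator (fun _ => (1:ℝ)) (X i ω)) / n

/-!
Fix the first sample `x` with `sup_A (μ_n(A) − μ(A)) ≥ t` and a set `A` nearly attaining the
supremum. Chebyshev's inequality with the variance bound `1/(4n)` shows that, as soon as
`4(1 − a)² n t² ≥ 2`, the ghost sample satisfies `|μ_n'(A) − μ(A)| < (1 − a) t` with probability at
least `1/2`, and then `μ_n(A) − μ_n'(A) ≥ a t` up to an arbitrarily small slack, which continuity
from above removes. Integrating over `x` (Fubini) yields the factor `2`. The second inequality is
the same argument applied to `μ(A) − μ_n(A)`, followed by exchanging the two samples. Pointwise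
measurability lets all suprema be taken over a countable subclass, so all events are measurable.
-/

section Symmetrization

variable {α β ι : Type*} [MeasurableSpace α] [MeasurableSpace β]

theorem le_measure_setOf_le_of_forall_lt {σ : Measure β} [IsFiniteMeasure σ] {g : β → ℝ}
    (hg : Measurable g) {c : ℝ} {r : ℝ≥0∞} (h : ∀ c' < c, r ≤ σ {y | c' < g y}) :
    r ≤ σ {y | c ≤ g y} := by
  obtain ⟨v, hv_mono, hv_lt, hv_lim⟩ := exists_seq_strictMono_tendsto c
  have hinter : {y | c ≤ g y} = ⋂ m, {y | v m < g y} := by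
    ext y
    simp only [mem_ofPred_eq, mem_iInter]
    exact ⟨fun hy m => (hv_lt m).trans_le hy,
      fun hy => le_of_tendsto' hv_lim fun m => (hy m).le⟩
  rw [hinter, Antitone.measure_iInter (s := fun m => {y | v m < g y})
    (fun m m' hmm' y hy => (hv_mono.monotone hmm').trans_lt hy)
    (fun m => (measurableSet_lt measurable_const hg).nullMeasurableSet) ⟨0, measure_ne_top σ _⟩]
  exact le_iInf fun m => h _ (hv_lt m)

variable [Countable ι] [Nonempty ι]

theorem le_measure_sub_le_iSup_sub {σ : Measure β} [IsFiniteMeasure σ] {a : ι → ℝ}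
    {u : ι → β → ℝ} (hu : ∀ i, Measurable (u i))
    (hbdd : ∀ y, BddAbove (range fun i => a i - u i y)) {t b : ℝ} (ht : t ≤ ⨆ i, a i)
    {r : ℝ≥0∞} (hr : ∀ i, r ≤ σ {y | u i y ≤ b}) :
    r ≤ σ {y | t - b ≤ ⨆ i, (a i - u i y)} := by
  refine le_measure_setOf_le_of_forall_lt (Measurable.iSup fun i => measurable_const.sub (hu i))
    fun c hc => ?_
  obtain ⟨i, hi⟩ := exists_lt_of_lt_ciSup (show c + b < ⨆ i, a i by linarith)
  refine (hr i).trans (measure_mono fun y (hy : u i y ≤ b) => ?_)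
  exact (show c < a i - u i y by linarith).trans_le (le_ciSup (hbdd y) i)

theorem measure_le_two_mul_prod_le_iSup_sub (ρ : Measure α) [SFinite ρ] (σ : Measure β)
    [IsFiniteMeasure σ] {h : ι → α → ℝ} {u : ι → β → ℝ} (hh : ∀ i, Measurable (h i))
    (hu : ∀ i, Measurable (u i)) (hbdd : ∀ x y, BddAbove (range fun i => h i x - u i y))
    {t b : ℝ} (hhalf : ∀ i, 2⁻¹ ≤ σ {y | u i y ≤ b}) :
    ρ {x | t ≤ ⨆ i, h i x} ≤ 2 * ρ.prod σ {q | t - b ≤ ⨆ i, (h i q.1 - u i q.2)} := by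
  set F := {q : α × β | t - b ≤ ⨆ i, (h i q.1 - u i q.2)}
  have hF : MeasurableSet F := measurableSet_le measurable_const
    (Measurable.iSup fun i => ((hh i).comp measurable_fst).sub ((hu i).comp measurable_snd))
  have hfiber : {x | t ≤ ⨆ i, h i x} ⊆ {x | 2⁻¹ ≤ σ (Prod.mk x ⁻¹' F)} :=
    fun x hx => le_measure_sub_le_iSup_sub hu (hbdd x) hx hhalf
  calc ρ {x | t ≤ ⨆ i, h i x} ≤ 2 * (2⁻¹ * ρ {x | 2⁻¹ ≤ σ (Prod.mk x ⁻¹' F)}) := by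
        rw [← mul_assoc, ENNReal.mul_inv_cancel two_ne_zero ENNReal.ofNat_ne_top, one_mul]
        exact measure_mono hfiber
    _ ≤ 2 * ∫⁻ x, σ (Prod.mk x ⁻¹' F) ∂ρ := by
        gcongr
        exact mul_meas_ge_le_lintegral₀ (measurable_measure_prodMk_left hF).aemeasurable _
    _ = 2 * ρ.prod σ F := by rw [Measure.prod_apply hF]

end Symmetrization

theorem pi_meas_ge_abs_sampleMean_sub_le_variance_div {E : Type*} [MeasurableSpace E]
    {μ : Measure E} [IsProbabilityMeasure μ] {n : ℕ} (hn : 0 < n) {g : E → ℝ} (hg : MemLp g 2 μ)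
    {c : ℝ} (hc : 0 < c) :
    Measure.pi (fun _ : Fin n => μ) {x | c ≤ |(∑ i, g (x i)) / n - μ[g]|} ≤
      ENNReal.ofReal (Var[g; μ] / (n * c ^ 2)) := by
  have hgi : ∀ i, MemLp (fun x : Fin n → E => g (x i)) 2 (Measure.pi fun _ : Fin n => μ) :=
    fun i => hg.comp_measurePreserving (measurePreserving_eval _ i)
  have hS : MemLp (∑ i, fun x : Fin n → E => g (x i)) 2 (Measure.pi fun _ : Fin n => μ) :=
    memLp_finsetSum' _ fun i _ => hgi i
  have hM : (fun x : Fin n → E => (∑ i, g (x i)) / n) =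
      fun x => (n : ℝ)⁻¹ * (∑ i, fun x : Fin n → E => g (x i)) x := by
    ext x; rw [Finset.sum_apply, div_eq_inv_mul]
  have hmean : (Measure.pi fun _ : Fin n => μ)[fun x => (∑ i, g (x i)) / n] = μ[g] := by
    rw [integral_div, integral_finsetSum _ fun i _ => (hgi i).integrable one_le_two]
    simp only [integral_comp_eval (μ := fun _ : Fin n => μ) (f := g) hg.aestronglyMeasurable,
      Finset.sum_const, Finset.card_univ, Fintype.card_fin, nsmul_eq_mul]
    field_simp
  have hvar :
      Var[fun x => (∑ i, g (x i)) / n; Measure.pi fun _ : Fin n => μ] = Var[g; μ] / n := by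
    rw [hM, variance_const_mul, variance_sum_pi fun _ => hg]
    simp only [Finset.sum_const, Finset.card_univ, Fintype.card_fin, nsmul_eq_mul]
    field_simp
  have := meas_ge_le_variance_div_sq (hM ▸ hS.const_mul (n : ℝ)⁻¹) hc
  rwa [hmean, hvar, div_div] at this

theorem map_prodMk_eq_pi_prod_pi {Ω E ι κ : Type*} [MeasurableSpace Ω] [MeasurableSpace E]
    {P : Measure Ω} [IsProbabilityMeasure P] [Fintype ι] [Fintype κ] {X : ι → Ω → E}
    {X' : κ → Ω → E} (hX : ∀ i, Measurable (X i)) (hX' : ∀ j, Measurable (X' j))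
    (hindep : iIndepFun (Sum.elim X X') P) :
    P.map (fun ω => (fun i => X i ω, fun j => X' j ω)) =
      (Measure.pi fun i => P.map (X i)).prod (Measure.pi fun j => P.map (X' j)) := by
  have hY : ∀ s, Measurable (Sum.elim X X' s) := Sum.rec hX hX'
  have hpi := (iIndepFun_iff_map_fun_eq_pi_map fun s => (hY s).aemeasurable).1 hindep
  have := (measurePreserving_sumPiEquivProdPi fun s => P.map (Sum.elim X X' s)).map_eq
  rw [← hpi, Measure.map_map (MeasurableEquiv.measurable _) (measurable_pi_lambda _ hY)] at this
  exact this

section EmpiricalMeasure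

variable {Ω ι : Type*} {d n : ℕ} (X : Fin n → Ω → (Fin d → ℝ)) (ω : Ω)

theorem empMeas_nonneg (A : Set (Fin d → ℝ)) : 0 ≤ empMeas X ω A :=
  div_nonneg (Finset.sum_nonneg fun _ _ => indicator_nonneg (fun _ _ => zero_le_one) _)
    n.cast_nonneg

theorem empMeas_le_one (A : Set (Fin d → ℝ)) : empMeas X ω A ≤ 1 := by
  refine div_le_one_of_le₀ ?_ n.cast_nonneg
  calc ∑ i, A.indicator (fun _ => (1 : ℝ)) (X i ω) ≤ ∑ _i : Fin n, (1 : ℝ) :=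
        Finset.sum_le_sum fun _ _ => indicator_apply_le' (fun _ => le_rfl) fun _ => zero_le_one
    _ = n := by simp

variable {X} in
theorem measurable_empMeas [MeasurableSpace Ω] (hX : ∀ i, Measurable (X i))
    {A : Set (Fin d → ℝ)} (hA : MeasurableSet A) : Measurable fun ω => empMeas X ω A :=
  (Finset.measurable_sum _ fun i _ => (measurable_const.indicator hA).comp (hX i)).div_const _

theorem measurable_empMeas_eval {A : Set (Fin d → ℝ)} (hA : MeasurableSet A) :
    Measurable fun x : Fin n → Fin d → ℝ => empMeas Function.eval x A :=
  measurable_empMeas measurable_pi_apply hA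

theorem tendsto_empMeas_of_eventually_mem_iff {L : Filter ι} {B : ι → Set (Fin d → ℝ)}
    {A : Set (Fin d → ℝ)} (hB : ∀ x, ∀ᶠ m in L, x ∈ B m ↔ x ∈ A) :
    Tendsto (fun m => empMeas X ω (B m)) L (𝓝 (empMeas X ω A)) := by
  refine tendsto_const_nhds.congr' ?_
  filter_upwards [eventually_all.2 fun i => hB (X i ω)] with m hm
  unfold empMeas
  congr 1
  exact Finset.sum_congr rfl fun i _ => indicator_const_eq_indicator_const (hm i).symm

end EmpiricalMeasure

theorem tendsto_measureReal_of_eventually_mem_iff {E ι : Type*} [MeasurableSpace E]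
    (μ : Measure E) [IsFiniteMeasure μ] {L : Filter ι} [L.IsCountablyGenerated]
    {B : ι → Set E} (hB : ∀ m, MeasurableSet (B m)) {A : Set E}
    (hlim : ∀ x, ∀ᶠ m in L, x ∈ B m ↔ x ∈ A) :
    Tendsto (fun m => μ.real (B m)) L (𝓝 (μ.real A)) :=
  (ENNReal.tendsto_toReal (measure_ne_top μ A)).comp
    (tendsto_measure_of_tendsto_indicator_of_isFiniteMeasure L μ hB hlim)

theorem ciSup_subtype_eq_of_tendsto {α : Type*} {s₀ s : Set α} (hs₀ : s₀ ⊆ s) [Nonempty s₀]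
    {f : α → ℝ} (hf : BddAbove (range f))
    (happrox : ∀ a ∈ s, ∃ b : ℕ → s₀, Tendsto (fun m => f (b m)) atTop (𝓝 (f a))) :
    ⨆ a : s, f a = ⨆ a : s₀, f a := by
  have : Nonempty s := let ⟨a⟩ := ‹Nonempty s₀›; ⟨⟨a, hs₀ a.2⟩⟩
  refine le_antisymm (ciSup_le fun a => ?_) (ciSup_le fun a => ?_)
  · obtain ⟨b, hb⟩ := happrox a a.2
    exact le_of_tendsto' hb fun m => le_ciSup (hf.mono (range_comp_subset_range _ f)) (b m)
  · exact le_ciSup (f := fun a : s => f a) (hf.mono (range_comp_subset_range _ f)) ⟨a, hs₀ a.2⟩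

theorem PointwiseMeasurable.exists_countable_eventually_mem_iff {d : ℕ}
    {𝒜 : Set (Set (Fin d → ℝ))} (h : PointwiseMeasurable 𝒜) :
    ∃ 𝒜₀ ⊆ 𝒜, 𝒜₀.Countable ∧
      ∀ A ∈ 𝒜, ∃ B : ℕ → 𝒜₀, ∀ x, ∀ᶠ m in atTop, x ∈ (B m : Set (Fin d → ℝ)) ↔ x ∈ A := by
  obtain ⟨𝒜₀, h𝒜₀, hc, happrox⟩ := h
  refine ⟨𝒜₀, h𝒜₀, hc, fun A hA => ?_⟩
  obtain ⟨B, hB, hlim⟩ := happrox A hA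
  exact ⟨fun m => ⟨B m, hB m⟩,
    fun x => (tendsto_indicator_const_apply_iff_eventually atTop (1 : ℝ) x).1 (hlim x)⟩

theorem PointwiseMeasurable.exists_countable_ciSup_eq {Ω : Type*} {d n : ℕ}
    {𝒜 : Set (Set (Fin d → ℝ))} (h𝒜pm : PointwiseMeasurable 𝒜) (h𝒜ne : 𝒜.Nonempty)
    (h𝒜meas : ∀ A ∈ 𝒜, MeasurableSet A) (μ : Measure (Fin d → ℝ)) [IsProbabilityMeasure μ]
    (X X' : Fin n → Ω → (Fin d → ℝ)) :
    ∃ 𝒜₀ ⊆ 𝒜, 𝒜₀.Countable ∧ 𝒜₀.Nonempty ∧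
      (∀ ω, ⨆ A : 𝒜, (empMeas X ω A - μ.real A) = ⨆ A : 𝒜₀, (empMeas X ω A - μ.real A)) ∧
      (∀ ω, ⨆ A : 𝒜, (μ.real A - empMeas X ω A) = ⨆ A : 𝒜₀, (μ.real A - empMeas X ω A)) ∧
      (∀ ω, ⨆ A : 𝒜, (empMeas X ω A - empMeas X' ω A) =
        ⨆ A : 𝒜₀, (empMeas X ω A - empMeas X' ω A)) := by
  obtain ⟨𝒜₀, h𝒜₀, h𝒜₀c, happrox⟩ := h𝒜pm.exists_countable_eventually_mem_iff
  have h𝒜₀ne : 𝒜₀.Nonempty := let ⟨A, hA⟩ := h𝒜ne; ⟨_, ((happrox A hA).choose 0).2⟩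
  have : Nonempty 𝒜₀ := h𝒜₀ne.to_subtype
  have hμ (A : Set (Fin d → ℝ)) (B : ℕ → 𝒜₀)
      (hB : ∀ x, ∀ᶠ m in atTop, x ∈ (B m : Set (Fin d → ℝ)) ↔ x ∈ A) :
      Tendsto (fun m => μ.real (B m)) atTop (𝓝 (μ.real A)) :=
    tendsto_measureReal_of_eventually_mem_iff μ (fun m => h𝒜meas _ (h𝒜₀ (B m).2)) hB
  refine ⟨𝒜₀, h𝒜₀, h𝒜₀c, h𝒜₀ne, fun ω => ?_, fun ω => ?_, fun ω => ?_⟩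
  · refine ciSup_subtype_eq_of_tendsto h𝒜₀ (f := fun A => empMeas X ω A - μ.real A)
      ⟨1, forall_mem_range.2 fun A => ?_⟩ fun A hA => (happrox A hA).imp fun B hB =>
        (tendsto_empMeas_of_eventually_mem_iff X ω hB).sub (hμ A B hB)
    linarith [empMeas_le_one X ω A, measureReal_nonneg (μ := μ) (s := A)]
  · refine ciSup_subtype_eq_of_tendsto h𝒜₀ (f := fun A => μ.real A - empMeas X ω A)
      ⟨1, forall_mem_range.2 fun A => ?_⟩ fun A hA => (happrox A hA).imp fun B hB =>
        (hμ A B hB).sub (tendsto_empMeas_of_eventually_mem_iff X ω hB)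
    linarith [empMeas_nonneg X ω A, measureReal_le_one (μ := μ) (s := A)]
  · refine ciSup_subtype_eq_of_tendsto h𝒜₀ (f := fun A => empMeas X ω A - empMeas X' ω A)
      ⟨1, forall_mem_range.2 fun A => ?_⟩ fun A hA => (happrox A hA).imp fun B hB =>
        (tendsto_empMeas_of_eventually_mem_iff X ω hB).sub
          (tendsto_empMeas_of_eventually_mem_iff X' ω hB)
    linarith [empMeas_le_one X ω A, empMeas_nonneg X' ω A]

section SampleSpace

variable {d n : ℕ} (μ : Measure (Fin d → ℝ)) [IsProbabilityMeasure μ]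

theorem half_le_pi_measure_abs_empMeas_sub_lt {b : ℝ} (hb : 0 < b) (hnb : 1 ≤ 2 * n * b ^ 2)
    {A : Set (Fin d → ℝ)} (hA : MeasurableSet A) :
    2⁻¹ ≤ Measure.pi (fun _ : Fin n => μ) {x | |empMeas Function.eval x A - μ.real A| < b} := by
  have hn : 0 < n := Nat.pos_of_ne_zero fun hn => by norm_num [hn] at hnb
  have hg : ∀ v, A.indicator (fun _ => (1 : ℝ)) v ∈ Icc 0 1 := fun v =>
    ⟨indicator_nonneg (fun _ _ => zero_le_one) v,
      indicator_apply_le' (fun _ => le_rfl) fun _ => zero_le_one⟩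
  have hgm : Measurable (A.indicator fun _ => (1 : ℝ)) := measurable_const.indicator hA
  have hvar : Var[A.indicator fun _ => (1 : ℝ); μ] / (n * b ^ 2) ≤ 2⁻¹ := by
    have := variance_le_sq_of_bounded (ae_of_all μ hg) hgm.aemeasurable
    rw [div_le_iff₀ (by positivity)]
    nlinarith
  have hcheb := pi_meas_ge_abs_sampleMean_sub_le_variance_div hn
    (memLp_of_bounded (ae_of_all μ hg) hgm.aestronglyMeasurable 2) hb
  rw [integral_indicator_const _ hA, smul_eq_mul, mul_one] at hcheb
  have hmeas :
      MeasurableSet {x : Fin n → Fin d → ℝ | b ≤ |empMeas Function.eval x A - μ.real A|} :=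
    measurableSet_le measurable_const ((measurable_empMeas_eval hA).sub_const _).abs
  have hcompl : {x : Fin n → Fin d → ℝ | |empMeas Function.eval x A - μ.real A| < b} =
      {x | b ≤ |empMeas Function.eval x A - μ.real A|}ᶜ := by
    ext x; simp
  rw [hcompl, prob_compl_eq_one_sub hmeas, ← ENNReal.one_sub_inv_two]
  refine tsub_le_tsub_left ((hcheb.trans (ENNReal.ofReal_le_ofReal hvar)).trans ?_) 1
  rw [ENNReal.ofReal_inv_of_pos two_pos, ENNReal.ofReal_ofNat]

theorem pi_symmetrization_of_countable {ι : Type*} [Countable ι] [Nonempty ι]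
    {A : ι → Set (Fin d → ℝ)} (hA : ∀ i, MeasurableSet (A i)) {b : ℝ} (hb : 0 < b)
    (hnb : 1 ≤ 2 * n * b ^ 2) (t : ℝ) :
    let ν := Measure.pi fun _ : Fin n => μ
    let S := {q : (Fin n → Fin d → ℝ) × (Fin n → Fin d → ℝ) |
      t - b ≤ ⨆ i, (empMeas Function.eval q.1 (A i) - empMeas Function.eval q.2 (A i))}
    ν {x | t ≤ ⨆ i, (empMeas Function.eval x (A i) - μ.real (A i))} ≤ 2 * ν.prod ν S ∧
      ν {x | t ≤ ⨆ i, (μ.real (A i) - empMeas Function.eval x (A i))} ≤ 2 * ν.prod ν S := by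
  intro ν S
  set emp := fun (x : Fin n → Fin d → ℝ) i => empMeas Function.eval x (A i)
  have hemp : ∀ i, Measurable fun x => emp x i := fun i => measurable_empMeas_eval (hA i)
  have hbdd : ∀ x y, BddAbove (range fun i => emp x i - emp y i) := fun x y =>
    ⟨1, forall_mem_range.2 fun i => by
      linarith [empMeas_le_one Function.eval x (A i), empMeas_nonneg Function.eval y (A i)]⟩
  have hhalf := fun i => half_le_pi_measure_abs_empMeas_sub_lt μ hb hnb (hA i)
  constructor
  · have := measure_le_two_mul_prod_le_iSup_sub ν ν (t := t) (b := b)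
      (h := fun i x => emp x i - μ.real (A i)) (u := fun i y => emp y i - μ.real (A i))
      (fun i => (hemp i).sub_const _) (fun i => (hemp i).sub_const _)
      (fun x y => by simpa only [sub_sub_sub_cancel_right] using hbdd x y)
      fun i => (hhalf i).trans (measure_mono fun y (hy : |emp y i - μ.real (A i)| < b) =>
        (abs_lt.1 hy).2.le)
    simpa only [sub_sub_sub_cancel_right] using this
  · have := measure_le_two_mul_prod_le_iSup_sub ν ν (t := t) (b := b)
      (h := fun i x => μ.real (A i) - emp x i) (u := fun i y => μ.real (A i) - emp y i)
      (fun i => (hemp i).const_sub _) (fun i => (hemp i).const_sub _)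
      (fun x y => by simpa only [sub_sub_sub_cancel_left] using hbdd y x)
      fun i => (hhalf i).trans (measure_mono fun y (hy : |emp y i - μ.real (A i)| < b) =>
        show μ.real (A i) - emp y i ≤ b by linarith [(abs_lt.1 hy).1])
    simp only [sub_sub_sub_cancel_left] at this
    refine this.trans (mul_le_mul_right ?_ 2)
    have hswap := Measure.le_map_apply (μ := ν.prod ν) measurable_swap.aemeasurable S
    rwa [Measure.prod_swap] at hswap

theorem symmetrization_of_countable {Ω : Type*} [MeasurableSpace Ω] (P : Measure Ω)
    [IsProbabilityMeasure P] {X X' : Fin n → Ω → (Fin d → ℝ)} (hX : ∀ i, Measurable (X i))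
    (hX' : ∀ i, Measurable (X' i))
    (hlaw : P.map (fun ω => (fun i => X i ω, fun i => X' i ω)) =
      (Measure.pi fun _ : Fin n => μ).prod (Measure.pi fun _ : Fin n => μ))
    {ι : Type*} [Countable ι] [Nonempty ι] {A : ι → Set (Fin d → ℝ)}
    (hA : ∀ i, MeasurableSet (A i)) {b : ℝ} (hb : 0 < b) (hnb : 1 ≤ 2 * n * b ^ 2) (t : ℝ) :
    let F := {ω | t - b ≤ ⨆ i, (empMeas X ω (A i) - empMeas X' ω (A i))}
    P {ω | t ≤ ⨆ i, (empMeas X ω (A i) - μ.real (A i))} ≤ 2 * P F ∧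
      P {ω | t ≤ ⨆ i, (μ.real (A i) - empMeas X ω (A i))} ≤ 2 * P F := by
  intro F
  have hU : Measurable fun ω i => X i ω := measurable_pi_lambda _ hX
  have hV : Measurable fun ω i => X' i ω := measurable_pi_lambda _ hX'
  have hlawU : P.map (fun ω i => X i ω) = Measure.pi fun _ : Fin n => μ := by
    rw [← Measure.fst_map_prodMk hV, hlaw, Measure.fst_prod]
  have hE : ∀ E, P ((fun ω i => X i ω) ⁻¹' E) ≤ Measure.pi (fun _ : Fin n => μ) E :=
    fun E => hlawU ▸ Measure.le_map_apply hU.aemeasurable E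
  have hF : P F = (Measure.pi fun _ : Fin n => μ).prod (Measure.pi fun _ : Fin n => μ)
      {q | t - b ≤ ⨆ i, (empMeas Function.eval q.1 (A i) - empMeas Function.eval q.2 (A i))} := by
    have hS : MeasurableSet {q : (Fin n → Fin d → ℝ) × (Fin n → Fin d → ℝ) |
        t - b ≤ ⨆ i, (empMeas Function.eval q.1 (A i) - empMeas Function.eval q.2 (A i))} :=
      measurableSet_le measurable_const (Measurable.iSup fun i =>
        ((measurable_empMeas_eval (hA i)).comp measurable_fst).sub
          ((measurable_empMeas_eval (hA i)).comp measurable_snd))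
    rw [← hlaw, Measure.map_apply (hU.prodMk hV) hS]
    rfl
  obtain ⟨h₁, h₂⟩ := pi_symmetrization_of_countable μ hA hb hnb t
  rw [hF]
  exact ⟨(hE _).trans h₁, (hE _).trans h₂⟩

end SampleSpace

theorem flexible_symmetrization_general
    {Ω : Type*} [MeasurableSpace Ω] (P : Measure Ω) [IsProbabilityMeasure P]
    {d n : ℕ}
    (μ : Measure (Fin d → ℝ)) [IsProbabilityMeasure μ]
    (X X' : Fin n → Ω → (Fin d → ℝ))
    (hXmeas : ∀ i, Measurable (X i)) (hX'meas : ∀ i, Measurable (X' i))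
    (hXlaw : ∀ i, Measure.map (X i) P = μ)
    (hX'law : ∀ i, Measure.map (X' i) P = μ)
    (hindep : iIndepFun (Sum.elim X X') P)
    (𝒜 : Set (Set (Fin d → ℝ))) (h𝒜ne : 𝒜.Nonempty)
    (h𝒜meas : ∀ A ∈ 𝒜, MeasurableSet A) (h𝒜pm : PointwiseMeasurable 𝒜)
    (t a : ℝ) (ht : 0 < t) (ha : a ∈ Set.Ioo (0:ℝ) 1)
    (hcond : 2 ≤ 4 * (1 - a) ^ 2 * n * t ^ 2) :
    P {ω | t ≤ ⨆ A : 𝒜, (empMeas X ω ↑A - (μ ↑A).toReal)} ≤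
        2 * P {ω | a * t ≤ ⨆ A : 𝒜, (empMeas X ω ↑A - empMeas X' ω ↑A)} ∧
    P {ω | t ≤ ⨆ A : 𝒜, ((μ ↑A).toReal - empMeas X ω ↑A)} ≤
        2 * P {ω | a * t ≤ ⨆ A : 𝒜, (empMeas X ω ↑A - empMeas X' ω ↑A)} := by
  obtain ⟨𝒜₀, h𝒜₀, h𝒜₀c, h𝒜₀ne, hsup₁, hsup₂, hsup₃⟩ :=
    h𝒜pm.exists_countable_ciSup_eq h𝒜ne h𝒜meas μ X X'
  have : Countable 𝒜₀ := h𝒜₀c.to_subtype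
  have : Nonempty 𝒜₀ := h𝒜₀ne.to_subtype
  have hlaw := map_prodMk_eq_pi_prod_pi hXmeas hX'meas hindep
  simp only [hXlaw, hX'law] at hlaw
  have hb : 0 < (1 - a) * t := mul_pos (sub_pos.2 ha.2) ht
  have := symmetrization_of_countable μ P hXmeas hX'meas hlaw
    (A := ((↑) : 𝒜₀ → Set (Fin d → ℝ))) (fun A => h𝒜meas _ (h𝒜₀ A.2)) hb (by nlinarith) t
  simp only [← measureReal_def, hsup₁, hsup₂, hsup₃, show a * t = t - (1 - a) * t by ring]
  exact this

/-- **Flexible symmetrization.** If `t > 0`, `a ∈ (0,1)` and `4(1−a)² n t² ≥ 2`, then the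
one-sided deviation probabilities of `μ_n` from `μ` are bounded by twice the deviation
probability between `μ_n` and the ghost empirical measure `μ_n'` at level `a t`. -/
theorem flexible_symmetrization
    {Ω : Type*} [MeasurableSpace Ω] (P : Measure Ω) [IsProbabilityMeasure P]
    {d n : ℕ} (hn : 0 < n)
    (μ : Measure (Fin d → ℝ)) [IsProbabilityMeasure μ]
    (X X' : Fin n → Ω → (Fin d → ℝ))
    (hXmeas : ∀ i, Measurable (X i)) (hX'meas : ∀ i, Measurable (X' i))
    (hXlaw : ∀ i, Measure.map (X i) P = μ)
    (hX'law : ∀ i, Measure.map (X' i) P = μ)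
    (hindep : iIndepFun (Sum.elim X X') P)
    (𝒜 : Set (Set (Fin d → ℝ))) (h𝒜ne : 𝒜.Nonempty)
    (h𝒜meas : ∀ A ∈ 𝒜, MeasurableSet A) (h𝒜pm : PointwiseMeasurable 𝒜)
    (t a : ℝ) (ht : 0 < t) (ha : a ∈ Set.Ioo (0:ℝ) 1)
    (hcond : 2 ≤ 4 * (1 - a) ^ 2 * n * t ^ 2) :
    P {ω | t ≤ ⨆ A : 𝒜, (empMeas X ω ↑A - (μ ↑A).toReal)} ≤
        2 * P {ω | a * t ≤ ⨆ A : 𝒜, (empMeas X ω ↑A - empMeas X' ω ↑A)} ∧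
    P {ω | t ≤ ⨆ A : 𝒜, ((μ ↑A).toReal - empMeas X ω ↑A)} ≤
        2 * P {ω | a * t ≤ ⨆ A : 𝒜, (empMeas X ω ↑A - empMeas X' ω ↑A)} :=
  flexible_symmetrization_general P μ X X' hXmeas hX'meas hXlaw hX'law hindep 𝒜 h𝒜ne h𝒜meas h𝒜pm t a
    ht ha hcond
end
end

section
/- Symmetrization under rare events: suppose there is a Borel set 𝔸 ⊆ ℝ^d with A ⊆ 𝔸 for every A ∈ 𝒜, and set p := μ(𝔸). Let t > 0 and a ∈ (0,1) be such that (1−a)² n t² ≥ 2p. Then P( sup_{A ∈ 𝒜} |μ_n(A) − μ(A)| ≥ t ) ≤ 4·P( sup_{A ∈ 𝒜} (μ_n(A) − μ_n'(A)) ≥ a t ). -/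
open MeasureTheory ProbabilityTheory Set Filter
open scoped ENNReal NNReal BigOperators Topology

noncomputable section

/-!
Enumerate a countable subclass `e₀, e₁, …` of `𝒜` that approximates every set of `𝒜` pointwise,
so that both suprema can be computed along it. Given the first sample, let `k` be the first index
at which `|μ_n(e_k) - μ(e_k)| > t - δ`. Since `k` depends only on the first sample, independence
and Chebyshev's inequality show that `|μ_n'(e_k) - μ(e_k)| ≤ (1 - a) t` with conditional
probability at least `1/2`: the variance of `1{X ∈ e_k}` is at most `μ(e_k) (1 - μ(e_k)) ≤ p`, and
`(1 - a)² n t² ≥ 2p`. On both events `|μ_n(e_k) - μ_n'(e_k)| > a t - δ`, and exchanging the two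
samples removes the absolute value at the cost of a second factor `2`. Suprema need not be
attained, hence the slack `δ`, which tends to `0` at the end.
-/

section Symmetrization

variable {Ω E : Type*} [MeasurableSpace Ω] [MeasurableSpace E] {P : Measure Ω} {Φ Ψ : Ω → E}

theorem measure_exists_lt_abs_le_two_mul_measure_exists_lt_abs_sub (hΦ : Measurable Φ)
    (hΨ : Measurable Ψ) (hind : IndepFun Φ Ψ P) {f : ℕ → E → ℝ} (hf : ∀ k, Measurable (f k))
    {s c : ℝ} (hhalf : ∀ k, 2⁻¹ ≤ P (Ψ ⁻¹' {v | |f k v| ≤ c})) :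
    P {ω | ∃ k, s < |f k (Φ ω)|} ≤ 2 * P {ω | ∃ k, s - c < |f k (Φ ω) - f k (Ψ ω)|} := by
  set M : ℕ → Set E := fun k => {v | s < |f k v|}
  set C : ℕ → Set E := fun k => {v | |f k v| ≤ c}
  have hM : ∀ k, MeasurableSet (disjointed M k) :=
    .disjointed fun k => measurableSet_lt measurable_const (hf k).abs
  have hC : ∀ k, MeasurableSet (C k) := fun k => measurableSet_le (hf k).abs measurable_const
  have hdisj : Pairwise (Function.onFun Disjoint fun k => Φ ⁻¹' disjointed M k) :=
    fun i j hij => (disjoint_disjointed M hij).preimage Φ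
  -- `Φ ⁻¹' disjointed M k` is the event that `k` is the first index with `s < |f k Φ|`
  have hcover : {ω | ∃ k, s < |f k (Φ ω)|} = ⋃ k, Φ ⁻¹' disjointed M k := by
    rw [← preimage_iUnion, iUnion_disjointed]
    ext ω
    simp [M]
  have hfirst : ∀ k, P (Φ ⁻¹' disjointed M k) ≤ 2 * P (Φ ⁻¹' disjointed M k ∩ Ψ ⁻¹' C k) := by
    intro k
    rw [hind.measure_inter_preimage_eq_mul _ _ (hM k) (hC k)]
    calc P (Φ ⁻¹' disjointed M k) = 2 * (P (Φ ⁻¹' disjointed M k) * 2⁻¹) := by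
          rw [mul_comm, mul_assoc, ENNReal.inv_mul_cancel two_ne_zero ENNReal.ofNat_ne_top,
            mul_one]
      _ ≤ 2 * (P (Φ ⁻¹' disjointed M k) * P (Ψ ⁻¹' C k)) := by gcongr; exact hhalf k
  have hclose : ⋃ k, (Φ ⁻¹' disjointed M k ∩ Ψ ⁻¹' C k) ⊆
      {ω | ∃ k, s - c < |f k (Φ ω) - f k (Ψ ω)|} := by
    intro ω hω
    obtain ⟨k, hMk, hCk⟩ := mem_iUnion.1 hω
    have hfar : s < |f k (Φ ω)| := disjointed_subset M k hMk
    have hnear : |f k (Ψ ω)| ≤ c := hCk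
    exact ⟨k, by linarith [abs_sub_abs_le_abs_sub (f k (Φ ω)) (f k (Ψ ω))]⟩
  calc P {ω | ∃ k, s < |f k (Φ ω)|} = ∑' k, P (Φ ⁻¹' disjointed M k) := by
        rw [hcover, measure_iUnion hdisj fun k => hΦ (hM k)]
    _ ≤ ∑' k, 2 * P (Φ ⁻¹' disjointed M k ∩ Ψ ⁻¹' C k) := ENNReal.tsum_le_tsum hfirst
    _ = 2 * P (⋃ k, (Φ ⁻¹' disjointed M k ∩ Ψ ⁻¹' C k)) := by
        rw [ENNReal.tsum_mul_left, measure_iUnion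
          (fun i j hij => (hdisj hij).mono inter_subset_left inter_subset_left)
          fun k => (hΦ (hM k)).inter (hΨ (hC k))]
    _ ≤ 2 * P {ω | ∃ k, s - c < |f k (Φ ω) - f k (Ψ ω)|} := by gcongr

theorem measure_exists_lt_abs_sub_le_two_mul
    (hexch : IdentDistrib (fun ω => (Φ ω, Ψ ω)) (fun ω => (Ψ ω, Φ ω)) P P)
    {g : ℕ → E → ℝ} (hg : ∀ k, Measurable (g k)) (r : ℝ) :
    P {ω | ∃ k, r < |g k (Φ ω) - g k (Ψ ω)|} ≤
      2 * P {ω | ∃ k, r < g k (Φ ω) - g k (Ψ ω)} := by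
  set W : Set (E × E) := {z | ∃ k, r < g k z.1 - g k z.2}
  have hW : MeasurableSet W := by
    simp only [W, ofPred_exists]
    exact .iUnion fun k => measurableSet_lt measurable_const
      (((hg k).comp measurable_fst).sub ((hg k).comp measurable_snd))
  calc P {ω | ∃ k, r < |g k (Φ ω) - g k (Ψ ω)|}
      ≤ P ((fun ω => (Φ ω, Ψ ω)) ⁻¹' W ∪ (fun ω => (Ψ ω, Φ ω)) ⁻¹' W) := by
        refine measure_mono fun ω ⟨k, hk⟩ => ?_
        rcases lt_abs.1 hk with hk | hk
        · exact .inl ⟨k, hk⟩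
        · exact .inr ⟨k, by linarith⟩
    _ ≤ P ((fun ω => (Φ ω, Ψ ω)) ⁻¹' W) + P ((fun ω => (Ψ ω, Φ ω)) ⁻¹' W) :=
        measure_union_le _ _
    _ = 2 * P {ω | ∃ k, r < g k (Φ ω) - g k (Ψ ω)} := by
        rw [← hexch.measure_mem_eq hW, two_mul]
        rfl

variable {ν : Measure E} [IsProbabilityMeasure ν]

theorem map_left_eq_of_map_prodMk_eq_prod (hΦ : Measurable Φ) (hΨ : Measurable Ψ)
    (hlaw : P.map (fun ω => (Φ ω, Ψ ω)) = ν.prod ν) : P.map Φ = ν := by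
  have h := congrArg (Measure.map Prod.fst) hlaw
  rwa [Measure.map_map measurable_fst (hΦ.prodMk hΨ), Measure.map_fst_prod, measure_univ,
    one_smul] at h

theorem map_right_eq_of_map_prodMk_eq_prod (hΦ : Measurable Φ) (hΨ : Measurable Ψ)
    (hlaw : P.map (fun ω => (Φ ω, Ψ ω)) = ν.prod ν) : P.map Ψ = ν := by
  have h := congrArg (Measure.map Prod.snd) hlaw
  rwa [Measure.map_map measurable_snd (hΦ.prodMk hΨ), Measure.map_snd_prod, measure_univ,
    one_smul] at h

theorem indepFun_of_map_prodMk_eq_prod [IsProbabilityMeasure P] (hΦ : Measurable Φ)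
    (hΨ : Measurable Ψ) (hlaw : P.map (fun ω => (Φ ω, Ψ ω)) = ν.prod ν) : IndepFun Φ Ψ P := by
  rw [indepFun_iff_map_prod_eq_prod_map_map hΦ.aemeasurable hΨ.aemeasurable, hlaw,
    map_left_eq_of_map_prodMk_eq_prod hΦ hΨ hlaw, map_right_eq_of_map_prodMk_eq_prod hΦ hΨ hlaw]

theorem identDistrib_prodMk_swap_of_map_prodMk_eq_prod (hΦ : Measurable Φ) (hΨ : Measurable Ψ)
    (hlaw : P.map (fun ω => (Φ ω, Ψ ω)) = ν.prod ν) :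
    IdentDistrib (fun ω => (Φ ω, Ψ ω)) (fun ω => (Ψ ω, Φ ω)) P P where
  aemeasurable_fst := (hΦ.prodMk hΨ).aemeasurable
  aemeasurable_snd := (hΨ.prodMk hΦ).aemeasurable
  map_eq := by
    rw [show (fun ω => (Ψ ω, Φ ω)) = Prod.swap ∘ fun ω => (Φ ω, Ψ ω) from rfl,
      ← Measure.map_map measurable_swap (hΦ.prodMk hΨ), hlaw, Measure.prod_swap]

theorem measure_exists_lt_abs_sub_le_four_mul [IsProbabilityMeasure P] (hΦ : Measurable Φ)
    (hΨ : Measurable Ψ) (hlaw : P.map (fun ω => (Φ ω, Ψ ω)) = ν.prod ν) {g : ℕ → E → ℝ}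
    (hg : ∀ k, Measurable (g k)) {m : ℕ → ℝ} {s c : ℝ}
    (hhalf : ∀ k, 2⁻¹ ≤ ν {v | |g k v - m k| ≤ c}) :
    P {ω | ∃ k, s < |g k (Φ ω) - m k|} ≤ 4 * P {ω | ∃ k, s - c < g k (Φ ω) - g k (Ψ ω)} := by
  have hhalfΨ : ∀ k, 2⁻¹ ≤ P (Ψ ⁻¹' {v | |g k v - m k| ≤ c}) := fun k => by
    rw [← Measure.map_apply hΨ (measurableSet_le ((hg k).sub_const _).abs measurable_const),
      map_right_eq_of_map_prodMk_eq_prod hΦ hΨ hlaw]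
    exact hhalf k
  calc P {ω | ∃ k, s < |g k (Φ ω) - m k|}
      ≤ 2 * P {ω | ∃ k, s - c < |(g k (Φ ω) - m k) - (g k (Ψ ω) - m k)|} :=
        measure_exists_lt_abs_le_two_mul_measure_exists_lt_abs_sub (f := fun k v => g k v - m k)
          hΦ hΨ (indepFun_of_map_prodMk_eq_prod hΦ hΨ hlaw) (fun k => (hg k).sub_const _) hhalfΨ
    _ ≤ 2 * (2 * P {ω | ∃ k, s - c < g k (Φ ω) - g k (Ψ ω)}) := by
        simp_rw [sub_sub_sub_cancel_right]
        gcongr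
        exact measure_exists_lt_abs_sub_le_two_mul
          (identDistrib_prodMk_swap_of_map_prodMk_eq_prod hΦ hΨ hlaw) hg _
    _ = 4 * P {ω | ∃ k, s - c < g k (Φ ω) - g k (Ψ ω)} := by
        rw [← mul_assoc]
        norm_num

end Symmetrization

section Limits

variable {Ω : Type*} [MeasurableSpace Ω] {P : Measure Ω} [IsFiniteMeasure P] {b C : ℝ≥0∞} {r : ℝ}

theorem le_mul_measure_le_of_forall_pos {f : Ω → ℝ} (hf : Measurable f) (hC : C ≠ ⊤)
    (h : ∀ δ > 0, b ≤ C * P {ω | r - δ < f ω}) : b ≤ C * P {ω | r ≤ f ω} := by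
  have hlim : Tendsto (fun δ => P {ω | r - δ < f ω}) (𝓝[>] 0)
      (𝓝 (P (⋂ δ > 0, {ω | r - δ < f ω}))) :=
    tendsto_measure_biInter_gt
      (fun δ _ => (measurableSet_lt measurable_const hf).nullMeasurableSet)
      (fun δ δ' _ hδ ω hω => by simp only [mem_ofPred_eq] at hω ⊢; linarith)
      ⟨1, one_pos, measure_ne_top _ _⟩
  have hinter : ⋂ δ > 0, {ω | r - δ < f ω} = {ω | r ≤ f ω} := by
    ext ω
    simp only [mem_iInter, mem_ofPred_eq]
    refine ⟨fun hω => le_of_forall_pos_lt_add fun δ hδ => ?_, fun hω δ hδ => by linarith⟩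
    linarith [hω δ hδ]
  rw [hinter] at hlim
  exact ge_of_tendsto (ENNReal.Tendsto.const_mul hlim (.inr hC))
    (eventually_nhdsWithin_of_forall h)

theorem le_mul_measure_le_iSup_of_forall_pos {g : ℕ → Ω → ℝ} (hg : ∀ k, Measurable (g k))
    (hbdd : ∀ ω, BddAbove (range fun k => g k ω)) (hC : C ≠ ⊤)
    (h : ∀ δ > 0, b ≤ C * P {ω | ∃ k, r - δ < g k ω}) : b ≤ C * P {ω | r ≤ ⨆ k, g k ω} :=
  le_mul_measure_le_of_forall_pos (.iSup hg) hC fun δ hδ => by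
    simpa only [lt_ciSup_iff (hbdd _)] using h δ hδ

end Limits

theorem map_prodMk_eq_prod_pi {Ω α ι ι' : Type*} [MeasurableSpace Ω] [MeasurableSpace α]
    [Fintype ι] [Fintype ι'] {P : Measure Ω} [IsProbabilityMeasure P] {μ : Measure α}
    [IsProbabilityMeasure μ] {X : ι → Ω → α} {X' : ι' → Ω → α} (hX : ∀ i, Measurable (X i))
    (hX' : ∀ i, Measurable (X' i)) (hXlaw : ∀ i, P.map (X i) = μ)
    (hX'law : ∀ i, P.map (X' i) = μ) (hind : iIndepFun (Sum.elim X X') P) :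
    P.map (fun ω => ((fun i => X i ω), (fun i => X' i ω))) =
      (Measure.pi fun _ : ι => μ).prod (Measure.pi fun _ : ι' => μ) := by
  have hmeas : ∀ j, Measurable (Sum.elim X X' j) := Sum.rec hX hX'
  have hjoint : P.map (fun ω j => Sum.elim X X' j ω) = Measure.pi fun _ : ι ⊕ ι' => μ := by
    rw [(iIndepFun_iff_map_fun_eq_pi_map fun j => (hmeas j).aemeasurable).1 hind]
    congr 1
    ext1 j
    cases j
    exacts [hXlaw _, hX'law _]
  rw [show (fun ω => ((fun i => X i ω), (fun i => X' i ω))) =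
      MeasurableEquiv.sumPiEquivProdPi (fun _ => α) ∘ fun ω j => Sum.elim X X' j ω from rfl,
    ← Measure.map_map (MeasurableEquiv.measurable _) (measurable_pi_lambda _ hmeas), hjoint,
    (measurePreserving_sumPiEquivProdPi fun _ => μ).map_eq]

section EmpiricalFrequency

variable {α : Type*} {n : ℕ}

def empiricalFreq (v : Fin n → α) (A : Set α) : ℝ :=
  (∑ i, A.indicator 1 (v i)) / n

theorem empiricalFreq_mem_Icc (v : Fin n → α) (A : Set α) : empiricalFreq v A ∈ Icc 0 1 := by
  have hle : ∀ i, A.indicator (1 : α → ℝ) (v i) ≤ 1 := fun i => indicator_le_self' (by simp) _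
  refine ⟨div_nonneg (Finset.sum_nonneg fun i _ => indicator_nonneg (by simp) _) n.cast_nonneg,
    div_le_one_of_le₀ ?_ n.cast_nonneg⟩
  simpa using Finset.sum_le_sum fun i (_ : i ∈ Finset.univ) => hle i

theorem empiricalFreq_sub_empiricalFreq_le_one (v w : Fin n → α) (A : Set α) :
    empiricalFreq v A - empiricalFreq w A ≤ 1 := by
  linarith [(empiricalFreq_mem_Icc v A).2, (empiricalFreq_mem_Icc w A).1]

theorem empiricalFreq_eq_smul_sum (A : Set α) : (fun v : Fin n → α => empiricalFreq v A) =
    (n : ℝ)⁻¹ • ∑ i : Fin n, fun v : Fin n → α => A.indicator 1 (v i) := by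
  ext v
  simp [empiricalFreq, div_eq_inv_mul]

theorem measurable_empiricalFreq [MeasurableSpace α] {A : Set α} (hA : MeasurableSet A) :
    Measurable fun v : Fin n → α => empiricalFreq v A :=
  (Finset.measurable_sum _ fun i _ =>
    (measurable_one.indicator hA).comp (measurable_pi_apply i)).div_const _

theorem tendsto_abs_empiricalFreq_sub_measureReal [MeasurableSpace α] (μ : Measure α)
    [IsFiniteMeasure μ] (v : Fin n → α) {B : ℕ → Set α} {A : Set α}
    (hB : ∀ m, MeasurableSet (B m)) (hlim : ∀ x, ∀ᶠ m in atTop, x ∈ B m ↔ x ∈ A) :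
    Tendsto (fun m => |empiricalFreq v (B m) - μ.real (B m)|) atTop
      (𝓝 |empiricalFreq v A - μ.real A|) := by
  have hfreq : ∀ᶠ m in atTop, empiricalFreq v A = empiricalFreq v (B m) := by
    filter_upwards [eventually_all.2 fun i => hlim (v i)] with m hm
    simp only [empiricalFreq, indicator_eq_indicator (hm _).symm rfl]
  have hμ : Tendsto (fun m => μ.real (B m)) atTop (𝓝 (μ.real A)) :=
    (ENNReal.tendsto_toReal (measure_ne_top μ A)).comp
      (tendsto_measure_of_tendsto_indicator_of_isFiniteMeasure atTop μ hB hlim)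
  exact ((tendsto_const_nhds.congr' hfreq).sub hμ).abs

variable [MeasurableSpace α] (μ : Measure α) [IsProbabilityMeasure μ] {A : Set α}

theorem abs_empiricalFreq_sub_measureReal_le_one (v : Fin n → α) (A : Set α) :
    |empiricalFreq v A - μ.real A| ≤ 1 :=
  abs_sub_le_of_nonneg_of_le (empiricalFreq_mem_Icc v A).1 (empiricalFreq_mem_Icc v A).2
    measureReal_nonneg measureReal_le_one

theorem variance_empiricalFreq_le (hA : MeasurableSet A) :
    Var[fun v => empiricalFreq v A; Measure.pi fun _ : Fin n => μ] ≤ μ.real A / n := by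
  have hZmeas : Measurable (A.indicator (1 : α → ℝ)) := measurable_one.indicator hA
  have hZbdd : ∀ᵐ x ∂μ, A.indicator (1 : α → ℝ) x ∈ Icc 0 1 :=
    ae_of_all _ fun x => ⟨indicator_nonneg (by simp) x, indicator_le_self' (by simp) x⟩
  have hZ : MemLp (A.indicator (1 : α → ℝ)) 2 μ :=
    memLp_of_bounded hZbdd hZmeas.aestronglyMeasurable 2
  -- Bhatia–Davis: a `[0, 1]`-valued variable with mean `q` has variance at most `q (1 - q) ≤ q`
  have hvar : Var[A.indicator (1 : α → ℝ); μ] ≤ μ.real A := by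
    have h := variance_le_sub_mul_sub hZbdd hZmeas.aemeasurable
    rw [integral_indicator_one hA] at h
    nlinarith [measureReal_nonneg (μ := μ) (s := A)]
  rw [empiricalFreq_eq_smul_sum, variance_smul, variance_sum_pi fun _ => hZ]
  simp only [Finset.sum_const, Finset.card_univ, Fintype.card_fin, nsmul_eq_mul]
  rcases n.eq_zero_or_pos with rfl | hn
  · simp
  · rw [inv_pow, div_eq_inv_mul]
    calc ((n : ℝ) ^ 2)⁻¹ * (n * Var[A.indicator 1; μ]) = (n : ℝ)⁻¹ * Var[A.indicator 1; μ] := by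
          field_simp
      _ ≤ (n : ℝ)⁻¹ * μ.real A := by gcongr

theorem integral_empiricalFreq (hn : 0 < n) (hA : MeasurableSet A) :
    ∫ v, empiricalFreq v A ∂(Measure.pi fun _ : Fin n => μ) = μ.real A := by
  have hZ : Integrable (A.indicator (1 : α → ℝ)) μ := (integrable_const 1).indicator hA
  simp only [empiricalFreq]
  rw [integral_div, integral_finsetSum _ fun i _ => integrable_comp_eval hZ]
  simp only [integral_comp_eval (μ := fun _ : Fin n => μ) hZ.aestronglyMeasurable,
    integral_indicator_one hA, Finset.sum_const, Finset.card_univ, Fintype.card_fin, nsmul_eq_mul]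
  field_simp

theorem measure_pi_abs_empiricalFreq_sub_ge_le (hn : 0 < n) (hA : MeasurableSet A) {c : ℝ}
    (hc : 0 < c) :
    Measure.pi (fun _ : Fin n => μ) {v | c ≤ |empiricalFreq v A - μ.real A|} ≤
      ENNReal.ofReal (μ.real A / (n * c ^ 2)) := by
  have hL2 : MemLp (fun v => empiricalFreq v A) 2 (Measure.pi fun _ : Fin n => μ) :=
    memLp_of_bounded (ae_of_all _ fun v => empiricalFreq_mem_Icc v A)
      (measurable_empiricalFreq hA).aestronglyMeasurable 2
  have h := meas_ge_le_variance_div_sq hL2 hc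
  rw [integral_empiricalFreq μ hn hA] at h
  refine h.trans (ENNReal.ofReal_le_ofReal ?_)
  rw [← div_div]
  gcongr
  exact variance_empiricalFreq_le μ hA

theorem half_le_measure_pi_abs_empiricalFreq_sub_le (hn : 0 < n) (hA : MeasurableSet A) {c : ℝ}
    (hc : 0 < c) (hsmall : 2 * μ.real A ≤ n * c ^ 2) :
    2⁻¹ ≤ Measure.pi (fun _ : Fin n => μ) {v | |empiricalFreq v A - μ.real A| ≤ c} := by
  set π := Measure.pi fun _ : Fin n => μ
  have hfar : π {v | c < |empiricalFreq v A - μ.real A|} ≤ 2⁻¹ :=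
    calc π {v | c < |empiricalFreq v A - μ.real A|}
        ≤ π {v | c ≤ |empiricalFreq v A - μ.real A|} :=
          measure_mono (ofPred_subset_ofPred.2 fun _ => le_of_lt)
      _ ≤ ENNReal.ofReal (μ.real A / (n * c ^ 2)) :=
          measure_pi_abs_empiricalFreq_sub_ge_le μ hn hA hc
      _ ≤ ENNReal.ofReal 2⁻¹ := by
          gcongr
          rw [div_le_iff₀ (by positivity)]
          linarith
      _ = 2⁻¹ := by simp
  have hcompl : {v : Fin n → α | |empiricalFreq v A - μ.real A| ≤ c} =
      {v | c < |empiricalFreq v A - μ.real A|}ᶜ := by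
    ext v
    simp
  rw [hcompl, prob_compl_eq_one_sub (measurableSet_lt measurable_const
    ((measurable_empiricalFreq hA).sub_const _).abs), ← ENNReal.one_sub_inv_two]
  gcongr

theorem measure_exists_lt_abs_empiricalFreq_sub_le_four_mul {Ω : Type*} [MeasurableSpace Ω]
    {P : Measure Ω} [IsProbabilityMeasure P] (hn : 0 < n) {Φ Ψ : Ω → (Fin n → α)}
    (hΦ : Measurable Φ) (hΨ : Measurable Ψ)
    (hlaw : P.map (fun ω => (Φ ω, Ψ ω)) =
      (Measure.pi fun _ : Fin n => μ).prod (Measure.pi fun _ : Fin n => μ))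
    {e : ℕ → Set α} (he : ∀ k, MeasurableSet (e k)) {s c : ℝ} (hc : 0 < c)
    (hsmall : ∀ k, 2 * μ.real (e k) ≤ n * c ^ 2) :
    P {ω | ∃ k, s < |empiricalFreq (Φ ω) (e k) - μ.real (e k)|} ≤
      4 * P {ω | ∃ k, s - c < empiricalFreq (Φ ω) (e k) - empiricalFreq (Ψ ω) (e k)} :=
  measure_exists_lt_abs_sub_le_four_mul hΦ hΨ hlaw (fun k => measurable_empiricalFreq (he k))
    fun k => half_le_measure_pi_abs_empiricalFreq_sub_le μ hn (he k) hc (hsmall k)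

end EmpiricalFrequency

theorem ciSup_le_ciSup_of_forall_exists_tendsto {ι : Sort*} [Nonempty ι] {F : ι → ℝ}
    {G : ℕ → ℝ} (hG : BddAbove (range G))
    (h : ∀ i, ∃ φ : ℕ → ℕ, Tendsto (G ∘ φ) atTop (𝓝 (F i))) : ⨆ i, F i ≤ ⨆ k, G k :=
  ciSup_le fun i =>
    let ⟨φ, hφ⟩ := h i
    le_of_tendsto' hφ fun m => le_ciSup hG (φ m)

theorem PointwiseMeasurable.exists_seq {d : ℕ} {𝒜 : Set (Set (Fin d → ℝ))}
    (h : PointwiseMeasurable 𝒜) (hne : 𝒜.Nonempty) :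
    ∃ e : ℕ → Set (Fin d → ℝ), (∀ k, e k ∈ 𝒜) ∧
      ∀ A ∈ 𝒜, ∃ φ : ℕ → ℕ, ∀ x, ∀ᶠ m in atTop, x ∈ e (φ m) ↔ x ∈ A := by
  obtain ⟨𝒜₀, h𝒜₀, hcount, happrox⟩ := h
  obtain ⟨B, hB, -⟩ := happrox _ hne.some_mem
  obtain ⟨e, rfl⟩ := hcount.exists_eq_range ⟨B 0, hB 0⟩
  refine ⟨e, fun k => h𝒜₀ (mem_range_self k), fun A hA => ?_⟩
  obtain ⟨B, hB, hlim⟩ := happrox A hA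
  choose φ hφ using hB
  exact ⟨φ, fun x => by simpa [hφ] using hlim x⟩

theorem iSup_abs_empMeas_sub_le {Ω : Type*} {d n : ℕ} (μ : Measure (Fin d → ℝ))
    [IsProbabilityMeasure μ] (X : Fin n → Ω → (Fin d → ℝ)) (ω : Ω)
    {𝒜 : Set (Set (Fin d → ℝ))} (hne : 𝒜.Nonempty) {e : ℕ → Set (Fin d → ℝ)}
    (he : ∀ k, MeasurableSet (e k))
    (happrox : ∀ A ∈ 𝒜, ∃ φ : ℕ → ℕ, ∀ x, ∀ᶠ m in atTop, x ∈ e (φ m) ↔ x ∈ A) :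
    ⨆ A : 𝒜, |empMeas X ω A - (μ A).toReal| ≤
      ⨆ k, |empiricalFreq (fun i => X i ω) (e k) - μ.real (e k)| := by
  have : Nonempty 𝒜 := hne.to_subtype
  refine ciSup_le_ciSup_of_forall_exists_tendsto
    ⟨1, forall_mem_range.2 fun k => abs_empiricalFreq_sub_measureReal_le_one μ _ _⟩ fun A => ?_
  obtain ⟨φ, hφ⟩ := happrox A A.2
  exact ⟨φ, tendsto_abs_empiricalFreq_sub_measureReal μ _ (fun m => he (φ m)) hφ⟩

theorem iSup_empiricalFreq_sub_le_iSup_empMeas_sub {Ω : Type*} {d n : ℕ}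
    (X X' : Fin n → Ω → (Fin d → ℝ)) (ω : Ω) {𝒜 : Set (Set (Fin d → ℝ))}
    {e : ℕ → Set (Fin d → ℝ)} (he𝒜 : ∀ k, e k ∈ 𝒜) :
    ⨆ k, (empiricalFreq (fun i => X i ω) (e k) - empiricalFreq (fun i => X' i ω) (e k)) ≤
      ⨆ A : 𝒜, (empMeas X ω A - empMeas X' ω A) :=
  ciSup_le fun k => le_ciSup_of_le
    ⟨1, forall_mem_range.2 fun _ => empiricalFreq_sub_empiricalFreq_le_one _ _ _⟩ ⟨e k, he𝒜 k⟩
    le_rfl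

theorem symmetrization_rare_events_general
    {Ω : Type*} [MeasurableSpace Ω] (P : Measure Ω) [IsProbabilityMeasure P]
    {d n : ℕ} (hn : 0 < n)
    (μ : Measure (Fin d → ℝ)) [IsProbabilityMeasure μ]
    (X X' : Fin n → Ω → (Fin d → ℝ))
    (hXmeas : ∀ i, Measurable (X i)) (hX'meas : ∀ i, Measurable (X' i))
    (hXlaw : ∀ i, Measure.map (X i) P = μ)
    (hX'law : ∀ i, Measure.map (X' i) P = μ)
    (hindep : iIndepFun (Sum.elim X X') P)
    (𝒜 : Set (Set (Fin d → ℝ))) (h𝒜ne : 𝒜.Nonempty)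
    (h𝒜meas : ∀ A ∈ 𝒜, MeasurableSet A) (h𝒜pm : PointwiseMeasurable 𝒜)
    (𝔸 : Set (Fin d → ℝ)) (h𝔸 : ∀ A ∈ 𝒜, A ⊆ 𝔸)
    (p : ℝ) (hp : p = (μ 𝔸).toReal)
    (t a : ℝ) (ht : 0 < t) (ha : a ∈ Set.Ioo (0:ℝ) 1)
    (hcond : 2 * p ≤ (1 - a) ^ 2 * n * t ^ 2) :
    P {ω | t ≤ ⨆ A : 𝒜, |empMeas X ω ↑A - (μ ↑A).toReal|} ≤
      4 * P {ω | a * t ≤ ⨆ A : 𝒜, (empMeas X ω ↑A - empMeas X' ω ↑A)} := by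
  obtain ⟨e, he𝒜, happrox⟩ := h𝒜pm.exists_seq h𝒜ne
  have he : ∀ k, MeasurableSet (e k) := fun k => h𝒜meas _ (he𝒜 k)
  have hsmall : ∀ k, 2 * μ.real (e k) ≤ n * ((1 - a) * t) ^ 2 := fun k => by
    have : μ.real (e k) ≤ p := hp ▸ measureReal_mono (h𝔸 _ (he𝒜 k)) (measure_ne_top _ _)
    nlinarith
  have hΦ : Measurable fun ω i => X i ω := measurable_pi_lambda _ hXmeas
  have hΨ : Measurable fun ω i => X' i ω := measurable_pi_lambda _ hX'meas
  refine (le_mul_measure_le_iSup_of_forall_pos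
    (fun k => ((measurable_empiricalFreq (he k)).comp hΦ).sub
      ((measurable_empiricalFreq (he k)).comp hΨ))
    (fun ω => ⟨1, forall_mem_range.2 fun _ => empiricalFreq_sub_empiricalFreq_le_one _ _ _⟩)
    ENNReal.ofNat_ne_top fun δ hδ => ?_).trans (mul_le_mul_right (measure_mono fun ω hω =>
      hω.trans (iSup_empiricalFreq_sub_le_iSup_empMeas_sub X X' ω he𝒜)) 4)
  calc P {ω | t ≤ ⨆ A : 𝒜, |empMeas X ω ↑A - (μ ↑A).toReal|}
      ≤ P {ω | ∃ k, t - δ < |empiricalFreq (fun i => X i ω) (e k) - μ.real (e k)|} :=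
        measure_mono fun ω hω => (lt_ciSup_iff ⟨1, forall_mem_range.2 fun _ =>
          abs_empiricalFreq_sub_measureReal_le_one μ _ _⟩).1 <|
            (sub_lt_self t hδ).trans_le (hω.trans (iSup_abs_empMeas_sub_le μ X ω h𝒜ne he happrox))
    _ ≤ 4 * P {ω | ∃ k, t - δ - (1 - a) * t <
          empiricalFreq (fun i => X i ω) (e k) - empiricalFreq (fun i => X' i ω) (e k)} :=
        measure_exists_lt_abs_empiricalFreq_sub_le_four_mul μ hn hΦ hΨ
          (map_prodMk_eq_prod_pi hXmeas hX'meas hXlaw hX'law hindep) he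
          (mul_pos (sub_pos.2 ha.2) ht) hsmall
    _ = 4 * P {ω | ∃ k, a * t - δ <
          empiricalFreq (fun i => X i ω) (e k) - empiricalFreq (fun i => X' i ω) (e k)} := by
        rw [show t - δ - (1 - a) * t = a * t - δ by ring]

/-- **Symmetrization under rare events.** If all sets of `𝒜` are contained in a set `𝔸`
with `p = μ(𝔸)`, `t > 0`, `a ∈ (0,1)` and `(1−a)² n t² ≥ 2p`, then
`P(sup_{A ∈ 𝒜} |μ_n(A) − μ(A)| ≥ t) ≤ 4 P(sup_{A ∈ 𝒜} (μ_n(A) − μ_n'(A)) ≥ a t)`. -/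
theorem symmetrization_rare_events
    {Ω : Type*} [MeasurableSpace Ω] (P : Measure Ω) [IsProbabilityMeasure P]
    {d n : ℕ} (hn : 0 < n)
    (μ : Measure (Fin d → ℝ)) [IsProbabilityMeasure μ]
    (X X' : Fin n → Ω → (Fin d → ℝ))
    (hXmeas : ∀ i, Measurable (X i)) (hX'meas : ∀ i, Measurable (X' i))
    (hXlaw : ∀ i, Measure.map (X i) P = μ)
    (hX'law : ∀ i, Measure.map (X' i) P = μ)
    (hindep : iIndepFun (Sum.elim X X') P)
    (𝒜 : Set (Set (Fin d → ℝ))) (h𝒜ne : 𝒜.Nonempty)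
    (h𝒜meas : ∀ A ∈ 𝒜, MeasurableSet A) (h𝒜pm : PointwiseMeasurable 𝒜)
    (𝔸 : Set (Fin d → ℝ)) (h𝔸meas : MeasurableSet 𝔸) (h𝔸 : ∀ A ∈ 𝒜, A ⊆ 𝔸)
    (p : ℝ) (hp : p = (μ 𝔸).toReal)
    (t a : ℝ) (ht : 0 < t) (ha : a ∈ Set.Ioo (0:ℝ) 1)
    (hcond : 2 * p ≤ (1 - a) ^ 2 * n * t ^ 2) :
    P {ω | t ≤ ⨆ A : 𝒜, |empMeas X ω ↑A - (μ ↑A).toReal|} ≤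
      4 * P {ω | a * t ≤ ⨆ A : 𝒜, (empMeas X ω ↑A - empMeas X' ω ↑A)} :=
  symmetrization_rare_events_general P hn μ X X' hXmeas hX'meas hXlaw hX'law hindep 𝒜 h𝒜ne h𝒜meas
    h𝒜pm 𝔸 h𝔸 p hp t a ht ha hcond
end
end

section
/- Conditioning trick: let K := Σ_{i=1}^n 1{X_i ∈ 𝔸}, which has the binomial distribution Bin(n,p). For every k ∈ {0,1,…,n} with P(K = k) > 0 and every finite collection A_1,…,A_m ∈ 𝒜, the conditional distribution of the vector (μ_n(A_1),…,μ_n(A_m)) given the event {K = k} equals the distribution of ((k/n)·μ_k^Y(A_1),…,(k/n)·μ_k^Y(A_m)). In particular, under pointwise measurability of 𝒜, the conditional distribution of sup_{A ∈ 𝒜} |μ_n(A) − μ(A)| given {K = k} equals the distribution of sup_{A ∈ 𝒜} |(k/n)·μ_k^Y(A) − μ(A)|. -/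
open MeasureTheory ProbabilityTheory Set Filter
open scoped ENNReal NNReal BigOperators Topology

noncomputable section

open Classical in
/-- The number of sample points falling in `𝔸`. -/
def rareCount {Ω : Type*} {d n : ℕ} (X : Fin n → Ω → (Fin d → ℝ))
    (𝔸 : Set (Fin d → ℝ)) (ω : Ω) : ℕ :=
  (Finset.univ.filter fun i => X i ω ∈ 𝔸).card

open Classical in
/-- The empirical measure `μ_k^Y(A)` of the first `k` variables of the sample
`Y_1, …, Y_n` (equal to `0` when `k = 0`). -/
def empMeasFirst {Ω : Type*} {d n : ℕ} (Y : Fin n → Ω → (Fin d → ℝ)) (k : ℕ) (ω : Ω)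
    (A : Set (Fin d → ℝ)) : ℝ :=
  (∑ i : Fin n, if (i : ℕ) < k ∧ Y i ω ∈ A then (1:ℝ) else 0) / k

/-!
Let `S` be a set of `k` indices. On the event that the sample points lying in `𝔸` are exactly
those indexed by `S`, the product measure `μ^⊗n` restricted to that event is again a product
measure, whose `S`-coordinates are, up to a constant factor, `μ(· | 𝔸)^⊗k`. Every `A ∈ 𝒜` lies in
`𝔸`, so the empirical counts over `𝒜` only see these `k` points: on each such event a statistic
of the counts has, up to normalisation, the law of the same statistic of `k` independent draws
from `μ(· | 𝔸)`. Summing over the sets `S` of size `k` gives the conditional law on `{K = k}`.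
For the supremum over `𝒜`, pointwise measurability reduces it to a supremum over a countable
subclass, which makes it measurable.
-/

namespace MeasureTheory.Measure

theorem pi_map_comp_of_injective {ι κ α : Type*} [Fintype ι] [DecidableEq ι] [Fintype κ]
    [MeasurableSpace α] (ρ : ι → Measure α) [∀ i, IsFiniteMeasure (ρ i)] {e : κ → ι}
    (he : e.Injective) :
    (Measure.pi ρ).map (fun x j => x (e j)) =
      (∏ i ∈ (Finset.univ.image e)ᶜ, ρ i univ) • Measure.pi (fun j => ρ (e j)) := by
  have hmeas : Measurable fun (x : ι → α) (j : κ) => x (e j) := by fun_prop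
  have hbox : ∀ t : κ → Set α, (∀ j, MeasurableSet (t j)) →
      (Measure.pi ρ).map (fun x j => x (e j)) (univ.pi t) =
        ((∏ i ∈ (Finset.univ.image e)ᶜ, ρ i univ) • Measure.pi fun j => ρ (e j)) (univ.pi t) := by
    intro t ht
    have hpre : (fun (x : ι → α) (j : κ) => x (e j)) ⁻¹' univ.pi t =
        univ.pi (Function.extend e t fun _ => univ) := by
      ext x
      simp only [mem_preimage, mem_univ_pi]
      refine ⟨fun hx i => ?_, fun hx j => by simpa [he.extend_apply] using hx (e j)⟩
      by_cases hi : ∃ j, e j = i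
      · obtain ⟨j, rfl⟩ := hi
        simpa [he.extend_apply] using hx j
      · simp [Function.extend_apply' _ _ _ hi]
    rw [map_apply hmeas (.univ_pi ht), hpre, pi_pi, smul_apply, pi_pi, smul_eq_mul,
      ← Finset.prod_compl_mul_prod (Finset.univ.image e), Finset.prod_image he.injOn]
    congr 1
    · refine Finset.prod_congr rfl fun i hi => ?_
      have : ¬∃ j, e j = i := by simpa using hi
      simp [Function.extend_apply' _ _ _ this]
    · simp [he.extend_apply]
  refine ext_of_generate_finite _ generateFrom_pi.symm isPiSystem_pi ?_ ?_
  · rintro _ ⟨t, ht, rfl⟩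
    exact hbox t fun j => ht j trivial
  · simpa using hbox (fun _ => univ) fun _ => .univ

end MeasureTheory.Measure

namespace ProbabilityTheory

variable {Ω α : Type*} [MeasurableSpace Ω] [MeasurableSpace α]

theorem restrict_eq_measure_smul_cond (μ : Measure Ω) [IsFiniteMeasure μ] {s : Set Ω}
    (hs : MeasurableSet s) : μ.restrict s = μ s • μ[|s] := by
  ext t ht
  rw [Measure.smul_apply, smul_eq_mul, mul_comm, cond_mul_eq_inter hs, Measure.restrict_apply ht,
    inter_comm]

theorem cond_map (μ : Measure Ω) {X : Ω → α} (hX : Measurable X) {s : Set α}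
    (hs : MeasurableSet s) : (μ.map X)[|s] = (μ[|X ⁻¹' s]).map X := by
  simp only [cond, Measure.map_smul, Measure.restrict_map hX hs, Measure.map_apply hX hs]

theorem map_cond_eq_of_map_restrict_eq_smul {β : Type*} [MeasurableSpace β] {μ : Measure Ω}
    [IsFiniteMeasure μ] {s : Set Ω} (hs : μ s ≠ 0) {f : Ω → β} (hf : Measurable f)
    {Q : Measure β} [IsProbabilityMeasure Q] {c : ℝ≥0∞} (h : (μ.restrict s).map f = c • Q) :
    (μ[|s]).map f = Q := by
  have hc : c = μ s := by
    simpa [Measure.map_apply hf .univ] using (congrArg (· univ) h).symm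
  rw [cond, Measure.map_smul, h, hc, smul_smul, ENNReal.inv_mul_cancel hs (measure_ne_top μ s),
    one_smul]

end ProbabilityTheory

open scoped Finset

section HitSet

variable {ι E : Type*}

def hitSet (𝔸 : Set E) (S : Finset ι) : Set (ι → E) :=
  {x | ∀ i, (x i ∈ 𝔸 ↔ i ∈ S)}

theorem hitSet_eq_univ_pi [DecidableEq ι] (𝔸 : Set E) (S : Finset ι) :
    hitSet 𝔸 S = univ.pi fun i => if i ∈ S then 𝔸 else 𝔸ᶜ := by
  ext x
  simp only [hitSet, mem_ofPred_eq, mem_univ_pi]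
  refine forall_congr' fun i => ?_
  by_cases hi : i ∈ S <;> simp [hi]

theorem measurableSet_hitSet [MeasurableSpace E] [Countable ι] {𝔸 : Set E}
    (h𝔸 : MeasurableSet 𝔸) (S : Finset ι) : MeasurableSet (hitSet 𝔸 S) := by
  classical
  rw [hitSet_eq_univ_pi]
  exact .univ_pi fun i => by split_ifs <;> [exact h𝔸; exact h𝔸.compl]

theorem pairwise_disjoint_hitSet (𝔸 : Set E) :
    Pairwise (Function.onFun Disjoint (hitSet 𝔸 : Finset ι → Set (ι → E))) := by
  intro S T hST
  refine Set.disjoint_left.2 fun x hS hT => hST ?_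
  ext i
  rw [← hS i, hT i]

open Classical in
theorem setOf_card_filter_eq_biUnion_hitSet [Fintype ι] (𝔸 : Set E) (k : ℕ) :
    {x : ι → E | #{i | x i ∈ 𝔸} = k} = ⋃ S ∈ Finset.powersetCard k Finset.univ, hitSet 𝔸 S := by
  ext x
  simp only [mem_ofPred_eq, mem_iUnion, Finset.mem_powersetCard_univ, hitSet, exists_prop]
  constructor
  · rintro rfl
    exact ⟨_, rfl, fun i => by simp⟩
  · rintro ⟨S, rfl, hS⟩
    congr
    ext i
    simp [hS]

theorem exists_map_restrict_hitSet_eq_smul [MeasurableSpace E] [Fintype ι] {κ : Type*}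
    [Fintype κ] (μ : Measure E) [IsProbabilityMeasure μ] {𝔸 : Set E} (h𝔸 : MeasurableSet 𝔸)
    (e : κ ↪ ι) :
    ∃ c : ℝ≥0∞, ((Measure.pi fun _ : ι => μ).restrict (hitSet 𝔸 (Finset.univ.map e))).map
      (fun x j => x (e j)) = c • Measure.pi fun _ : κ => μ[|𝔸] := by
  classical
  have hpi : Measure.pi (fun _ : κ => μ.restrict 𝔸) =
      μ 𝔸 ^ Fintype.card κ • Measure.pi fun _ : κ => μ[|𝔸] := by
    refine Measure.pi_eq fun s hs => ?_
    simp [restrict_eq_measure_smul_cond μ h𝔸, Measure.pi_pi, Finset.prod_mul_distrib]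
  rw [hitSet_eq_univ_pi, Measure.restrict_pi_pi, Measure.pi_map_comp_of_injective _ e.injective]
  simp only [Finset.mem_map', Finset.mem_univ, if_true, hpi, smul_smul]
  exact ⟨_, rfl⟩

end HitSet

open Classical in
theorem map_cond_card_filter_eq_map_pi_cond {ι κ E T : Type*} [Fintype ι] [Fintype κ]
    [MeasurableSpace E] [MeasurableSpace T] (μ : Measure E) [IsProbabilityMeasure μ] {𝔸 : Set E}
    (h𝔸 : MeasurableSet 𝔸) (hμ𝔸 : μ 𝔸 ≠ 0) {Φ : (ι → E) → T} {Ψ : (κ → E) → T}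
    (hΦ : Measurable Φ) (hΨ : Measurable Ψ)
    (hΦΨ : ∀ (e : κ ↪ ι) x, x ∈ hitSet 𝔸 (Finset.univ.map e) → Φ x = Ψ fun j => x (e j))
    (hpos : Measure.pi (fun _ : ι => μ) {x | #{i | x i ∈ 𝔸} = Fintype.card κ} ≠ 0) :
    ((Measure.pi fun _ : ι => μ)[|{x | #{i | x i ∈ 𝔸} = Fintype.card κ}]).map Φ =
      (Measure.pi fun _ : κ => μ[|𝔸]).map Ψ := by
  have : IsProbabilityMeasure (μ[|𝔸]) := cond_isProbabilityMeasure hμ𝔸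
  have : IsProbabilityMeasure ((Measure.pi fun _ : κ => μ[|𝔸]).map Ψ) :=
    Measure.isProbabilityMeasure_map hΨ.aemeasurable
  have hpiece : ∀ S ∈ Finset.powersetCard (Fintype.card κ) (Finset.univ : Finset ι), ∃ c : ℝ≥0∞,
      ((Measure.pi fun _ : ι => μ).restrict (hitSet 𝔸 S)).map Φ =
        c • (Measure.pi fun _ : κ => μ[|𝔸]).map Ψ := by
    intro S hS
    obtain ⟨e, rfl⟩ := Function.Embedding.exists_of_card_eq_finset
      (Finset.mem_powersetCard_univ.1 hS).symm
    obtain ⟨c, hc⟩ := exists_map_restrict_hitSet_eq_smul μ h𝔸 e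
    have hmeas : Measurable fun (x : ι → E) (j : κ) => x (e j) := by fun_prop
    refine ⟨c, ?_⟩
    rw [Measure.map_congr (ae_restrict_of_forall_mem (measurableSet_hitSet h𝔸 _) (hΦΨ e))]
    exact (Measure.map_map hΨ hmeas).symm.trans (by rw [hc, Measure.map_smul])
  choose! c hc using hpiece
  -- The scalars `c S` need not be computed: their sum is forced to be the total mass.
  refine map_cond_eq_of_map_restrict_eq_smul hpos hΦ
    (c := ∑' S : Finset.powersetCard (Fintype.card κ) (Finset.univ : Finset ι), c S) ?_
  rw [setOf_card_filter_eq_biUnion_hitSet, Measure.restrict_biUnion_finset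
    ((pairwise_disjoint_hitSet 𝔸).set_pairwise _) (measurableSet_hitSet h𝔸),
    Measure.map_sum hΦ.aemeasurable]
  ext B hB
  simp only [hc _ (Subtype.prop _), Measure.sum_apply _ hB, Measure.smul_apply, smul_eq_mul,
    ENNReal.tsum_mul_right]

section SampleCount

variable {ι κ E : Type*} [Fintype ι]

def sampleCount (x : ι → E) (A : Set E) : ℝ :=
  ∑ i, A.indicator (fun _ => (1 : ℝ)) (x i)

theorem measurable_sampleCount [MeasurableSpace E] {A : Set E} (hA : MeasurableSet A) :
    Measurable fun x : ι → E => sampleCount x A :=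
  Finset.measurable_sum _ fun i _ => (measurable_const.indicator hA).comp (measurable_pi_apply i)

theorem sampleCount_comp_of_mem_hitSet [Fintype κ] {𝔸 A : Set E} (hA : A ⊆ 𝔸) (e : κ ↪ ι)
    {x : ι → E} (hx : x ∈ hitSet 𝔸 (Finset.univ.map e)) :
    sampleCount x A = sampleCount (fun j => x (e j)) A := by
  rw [sampleCount, sampleCount, ← Finset.sum_map Finset.univ e fun i => A.indicator _ (x i)]
  refine (Finset.sum_subset (Finset.subset_univ _) fun i _ hi => ?_).symm
  exact indicator_of_notMem (fun hxA => hi ((hx i).1 (hA hxA))) _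

theorem sampleCount_nonneg (x : ι → E) (A : Set E) : 0 ≤ sampleCount x A :=
  Finset.sum_nonneg fun _ _ => indicator_nonneg (fun _ _ => zero_le_one) _

theorem sampleCount_le_card (x : ι → E) (A : Set E) : sampleCount x A ≤ Fintype.card ι := by
  unfold sampleCount
  simpa using Finset.sum_le_sum fun i (_ : i ∈ Finset.univ) =>
    indicator_le_self' (fun _ _ => zero_le_one) (x i) (s := A) (f := fun _ => (1 : ℝ))

end SampleCount

theorem mul_empMeasFirst_eq_sampleCount_div {Ω : Type*} {d n k : ℕ} (hkn : k ≤ n)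
    (Y : Fin n → Ω → (Fin d → ℝ)) (ω : Ω) (A : Set (Fin d → ℝ)) :
    (k / n : ℝ) * empMeasFirst Y k ω A = sampleCount (fun j => Y (Fin.castLE hkn j) ω) A / n := by
  classical
  have hfirst : Finset.univ.filter (fun i : Fin n => (i : ℕ) < k) =
      Finset.univ.map (Fin.castLEEmb hkn) := by
    ext i
    simp only [Finset.mem_filter, Finset.mem_univ, true_and, Finset.mem_map, Fin.castLEEmb_apply]
    exact ⟨fun hi => ⟨⟨i, hi⟩, rfl⟩, by rintro ⟨j, rfl⟩; exact j.2⟩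
  have hsum : (∑ i : Fin n, if (i : ℕ) < k ∧ Y i ω ∈ A then (1 : ℝ) else 0) =
      sampleCount (fun j => Y (Fin.castLE hkn j) ω) A := by
    simp only [ite_and]
    rw [← Finset.sum_filter, hfirst, Finset.sum_map]
    simp only [sampleCount, Fin.castLEEmb_apply, indicator_apply]
  rw [empMeasFirst, hsum]
  rcases Nat.eq_zero_or_pos k with rfl | hk
  · simp [sampleCount]
  · field_simp

theorem PointwiseMeasurable.measurable_iSup {d : ℕ} {𝒜 : Set (Set (Fin d → ℝ))}
    (h𝒜 : PointwiseMeasurable 𝒜) {β : Type*} [MeasurableSpace β] {F : Set (Fin d → ℝ) → β → ℝ}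
    (hF : ∀ A ∈ 𝒜, Measurable (F A)) (hbdd : ∀ y, BddAbove ((F · y) '' 𝒜))
    (hF_lim : ∀ y A (B : ℕ → Set (Fin d → ℝ)), A ∈ 𝒜 → (∀ m, B m ∈ 𝒜) →
      (∀ x, ∀ᶠ m in atTop, (x ∈ B m ↔ x ∈ A)) → Tendsto (fun m => F (B m) y) atTop (𝓝 (F A y))) :
    Measurable fun y => ⨆ A : 𝒜, F A y := by
  obtain ⟨𝒜₀, h₀, h₀_count, h₀_approx⟩ := h𝒜
  have hsup : ∀ y, ⨆ A : 𝒜, F A y = ⨆ A : 𝒜₀, F A y := by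
    intro y
    rw [← sSup_image' (f := (F · y)), ← sSup_image' (f := (F · y))]
    rcases 𝒜.eq_empty_or_nonempty with rfl | ⟨A, hA⟩
    · rw [subset_empty_iff.1 h₀]
    obtain ⟨B, hB, -⟩ := h₀_approx A hA
    have hne₀ : ((F · y) '' 𝒜₀).Nonempty := ⟨_, mem_image_of_mem _ (hB 0)⟩
    refine le_antisymm (csSup_le ⟨_, mem_image_of_mem _ hA⟩ ?_)
      (csSup_le_csSup (hbdd y) hne₀ (image_mono h₀))
    rintro _ ⟨A', hA', rfl⟩
    obtain ⟨B, hB, hlim⟩ := h₀_approx A' hA'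
    refine le_of_tendsto' (hF_lim y A' B hA' (fun m => h₀ (hB m)) fun x => ?_)
      fun m => le_csSup ((hbdd y).mono (image_mono h₀)) (mem_image_of_mem _ (hB m))
    exact (tendsto_indicator_const_apply_iff_eventually _ (1 : ℝ) x).1 (hlim x)
  have := h₀_count.to_subtype
  simp_rw [hsup]
  exact Measurable.iSup fun A => hF A (h₀ A.2)

theorem measurable_iSup_abs_sampleCount_div_sub {d : ℕ} {ι : Type*} [Fintype ι]
    (μ : Measure (Fin d → ℝ)) [IsFiniteMeasure μ] {𝒜 : Set (Set (Fin d → ℝ))}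
    (h𝒜 : PointwiseMeasurable 𝒜) (h𝒜meas : ∀ A ∈ 𝒜, MeasurableSet A) (c : ℝ) :
    Measurable fun x : ι → (Fin d → ℝ) => ⨆ A : 𝒜, |sampleCount x A / c - (μ A).toReal| := by
  refine h𝒜.measurable_iSup (F := fun A x => |sampleCount x A / c - (μ A).toReal|)
    (fun A hA => (((measurable_sampleCount (h𝒜meas A hA)).div_const c).sub_const _).abs)
    (fun x => ⟨Fintype.card ι / |c| + (μ univ).toReal, ?_⟩) fun x A B hA hB hlim => ?_
  · rintro _ ⟨A, -, rfl⟩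
    calc |sampleCount x A / c - (μ A).toReal| ≤ |sampleCount x A / c| + |(μ A).toReal| :=
          abs_sub _ _
      _ ≤ Fintype.card ι / |c| + (μ univ).toReal := by
          rw [abs_div, abs_of_nonneg (sampleCount_nonneg x A), abs_of_nonneg ENNReal.toReal_nonneg]
          gcongr
          · exact sampleCount_le_card x A
          · exact measure_ne_top μ univ
          · exact subset_univ A
  · have hcount : Tendsto (fun m => sampleCount x (B m)) atTop (𝓝 (sampleCount x A)) :=
      tendsto_finsetSum _ fun i _ =>
        (tendsto_indicator_const_apply_iff_eventually _ (1 : ℝ) (x i)).2 (hlim (x i))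
    have hmeasure : Tendsto (fun m => (μ (B m)).toReal) atTop (𝓝 (μ A).toReal) :=
      (ENNReal.tendsto_toReal (measure_ne_top μ A)).comp
        (tendsto_measure_of_tendsto_indicator_of_isFiniteMeasure atTop μ
          (fun m => h𝒜meas _ (hB m)) hlim)
    exact ((hcount.div_const c).sub hmeasure).abs

theorem map_cond_rareCount_eq_map {Ω : Type*} [MeasurableSpace Ω] (P : Measure Ω)
    [IsProbabilityMeasure P] {d n k : ℕ} (hkn : k ≤ n) (μ : Measure (Fin d → ℝ))
    [IsProbabilityMeasure μ] {𝔸 : Set (Fin d → ℝ)} (h𝔸 : MeasurableSet 𝔸) (hμ𝔸 : μ 𝔸 ≠ 0)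
    {X Y : Fin n → Ω → (Fin d → ℝ)} (hXmeas : ∀ i, Measurable (X i))
    (hYmeas : ∀ i, Measurable (Y i)) (hX : P.map (fun ω i => X i ω) = Measure.pi fun _ => μ)
    (hY : P.map (fun ω j => Y (Fin.castLE hkn j) ω) = Measure.pi fun _ => μ[|𝔸])
    (hk : P {ω | rareCount X 𝔸 ω = k} ≠ 0) {𝒜 : Set (Set (Fin d → ℝ))} (h𝒜 : ∀ A ∈ 𝒜, A ⊆ 𝔸)
    {T : Type*} [MeasurableSpace T] (G : (𝒜 → ℝ) → T)
    (hG : ∀ m, Measurable fun x : Fin m → (Fin d → ℝ) => G fun A => sampleCount x A) :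
    (P[|{ω | rareCount X 𝔸 ω = k}]).map (fun ω => G fun A => sampleCount (fun i => X i ω) A) =
      P.map (fun ω => G fun A => sampleCount (fun j => Y (Fin.castLE hkn j) ω) A) := by
  classical
  have hXvec : Measurable fun ω i => X i ω := measurable_pi_lambda _ hXmeas
  have hYvec : Measurable fun ω (j : Fin k) => Y (Fin.castLE hkn j) ω :=
    measurable_pi_lambda _ fun j => hYmeas _
  have hcount : MeasurableSet {x : Fin n → (Fin d → ℝ) | #{i | x i ∈ 𝔸} = k} := by
    rw [setOf_card_filter_eq_biUnion_hitSet]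
    exact Finset.measurableSet_biUnion _ fun S _ => measurableSet_hitSet h𝔸 S
  have hpre : {ω | rareCount X 𝔸 ω = k} =
      (fun ω i => X i ω) ⁻¹' {x : Fin n → (Fin d → ℝ) | #{i | x i ∈ 𝔸} = k} := rfl
  have hcond := map_cond_card_filter_eq_map_pi_cond (κ := Fin k) μ h𝔸 hμ𝔸 (hG n) (hG k)
    (fun e x hx => congrArg G (funext fun A => sampleCount_comp_of_mem_hitSet (h𝒜 A A.2) e hx))
  rw [Fintype.card_fin, ← hX, Measure.map_apply hXvec hcount, ← hpre] at hcond
  calc (P[|{ω | rareCount X 𝔸 ω = k}]).map (fun ω => G fun A => sampleCount (fun i => X i ω) A)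
      = ((P[|(fun ω i => X i ω) ⁻¹' {x | #{i | x i ∈ 𝔸} = k}]).map fun ω i => X i ω).map
          fun x => G fun A => sampleCount x A := by rw [Measure.map_map (hG n) hXvec, hpre]; rfl
    _ = (Measure.pi fun _ => μ[|𝔸]).map fun y => G fun A => sampleCount y A := by
      rw [← cond_map P hXvec hcount, hcond hk]
    _ = P.map (fun ω => G fun A => sampleCount (fun j => Y (Fin.castLE hkn j) ω) A) := by
      rw [← hY, Measure.map_map (hG k) hYvec]
      rfl

theorem conditioning_trick_general
    {Ω : Type*} [MeasurableSpace Ω] (P : Measure Ω) [IsProbabilityMeasure P]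
    {d n : ℕ}
    (μ : Measure (Fin d → ℝ)) [IsProbabilityMeasure μ]
    (X Y : Fin n → Ω → (Fin d → ℝ))
    (hXmeas : ∀ i, Measurable (X i)) (hYmeas : ∀ i, Measurable (Y i))
    (𝔸 : Set (Fin d → ℝ)) (h𝔸meas : MeasurableSet 𝔸) (hp : 0 < (μ 𝔸).toReal)
    (hXlaw : ∀ i, Measure.map (X i) P = μ)
    (hYlaw : ∀ i, Measure.map (Y i) P = ProbabilityTheory.cond μ 𝔸)
    (hindep : iIndepFun (Sum.elim X Y) P)
    (𝒜 : Set (Set (Fin d → ℝ)))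
    (h𝒜meas : ∀ A ∈ 𝒜, MeasurableSet A) (h𝒜pm : PointwiseMeasurable 𝒜)
    (h𝔸 : ∀ A ∈ 𝒜, A ⊆ 𝔸)
    (k : ℕ) (hkn : k ≤ n) (hk : P {ω | rareCount X 𝔸 ω = k} ≠ 0) :
    (∀ (m : ℕ) (A : Fin m → Set (Fin d → ℝ)), (∀ j, A j ∈ 𝒜) →
      Measure.map (fun ω (j : Fin m) => empMeas X ω (A j))
          (ProbabilityTheory.cond P {ω | rareCount X 𝔸 ω = k}) =
        Measure.map (fun ω (j : Fin m) => ((k : ℝ) / n) * empMeasFirst Y k ω (A j)) P) ∧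
    Measure.map (fun ω => ⨆ A : 𝒜, |empMeas X ω ↑A - (μ ↑A).toReal|)
        (ProbabilityTheory.cond P {ω | rareCount X 𝔸 ω = k}) =
      Measure.map (fun ω => ⨆ A : 𝒜, |((k : ℝ) / n) * empMeasFirst Y k ω ↑A - (μ ↑A).toReal|)
        P := by
  have hμ𝔸 : μ 𝔸 ≠ 0 := fun h => by simp [h] at hp
  have hX : P.map (fun ω i => X i ω) = Measure.pi fun _ => μ := by
    rw [(hindep.precomp Sum.inl_injective).map_fun_eq_pi_map fun i => (hXmeas i).aemeasurable]
    simp only [hXlaw]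
  have hY : P.map (fun ω j => Y (Fin.castLE hkn j) ω) = Measure.pi fun _ => μ[|𝔸] := by
    rw [(hindep.precomp (Sum.inr_injective.comp (Fin.castLE_injective hkn))).map_fun_eq_pi_map
      fun j => (hYmeas _).aemeasurable]
    simp only [hYlaw]
  have hcond := fun (T : Type) [MeasurableSpace T] =>
    map_cond_rareCount_eq_map (T := T) P hkn μ h𝔸meas hμ𝔸 hXmeas hYmeas hX hY hk h𝔸
  simp_rw [mul_empMeasFirst_eq_sampleCount_div hkn]
  refine ⟨fun m A hA => ?_, ?_⟩
  · exact hcond _ (fun v j => v ⟨A j, hA j⟩ / n) fun _ => measurable_pi_lambda _ fun j =>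
      (measurable_sampleCount (h𝒜meas _ (hA j))).div_const _
  · exact hcond _ (fun v => ⨆ A : 𝒜, |v A / n - (μ A).toReal|) fun _ =>
      measurable_iSup_abs_sampleCount_div_sub μ h𝒜pm h𝒜meas _

/-- **Conditioning trick.** Conditionally on `K = k`, the finite-dimensional distributions of
`μ_n` over `𝒜` coincide with those of `(k/n) μ_k^Y` where `Y_1, …, Y_n` is an independent
sample from `μ(· | 𝔸)`; in particular the same holds for the maximal deviation. -/
theorem conditioning_trick
    {Ω : Type*} [MeasurableSpace Ω] (P : Measure Ω) [IsProbabilityMeasure P]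
    {d n : ℕ} (hn : 0 < n)
    (μ : Measure (Fin d → ℝ)) [IsProbabilityMeasure μ]
    (X Y : Fin n → Ω → (Fin d → ℝ))
    (hXmeas : ∀ i, Measurable (X i)) (hYmeas : ∀ i, Measurable (Y i))
    (𝔸 : Set (Fin d → ℝ)) (h𝔸meas : MeasurableSet 𝔸) (hp : 0 < (μ 𝔸).toReal)
    (hXlaw : ∀ i, Measure.map (X i) P = μ)
    (hYlaw : ∀ i, Measure.map (Y i) P = ProbabilityTheory.cond μ 𝔸)
    (hindep : iIndepFun (Sum.elim X Y) P)
    (𝒜 : Set (Set (Fin d → ℝ))) (h𝒜ne : 𝒜.Nonempty)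
    (h𝒜meas : ∀ A ∈ 𝒜, MeasurableSet A) (h𝒜pm : PointwiseMeasurable 𝒜)
    (h𝔸 : ∀ A ∈ 𝒜, A ⊆ 𝔸)
    (k : ℕ) (hkn : k ≤ n) (hk : P {ω | rareCount X 𝔸 ω = k} ≠ 0) :
    (∀ (m : ℕ) (A : Fin m → Set (Fin d → ℝ)), (∀ j, A j ∈ 𝒜) →
      Measure.map (fun ω (j : Fin m) => empMeas X ω (A j))
          (ProbabilityTheory.cond P {ω | rareCount X 𝔸 ω = k}) =
        Measure.map (fun ω (j : Fin m) => ((k : ℝ) / n) * empMeasFirst Y k ω (A j)) P) ∧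
    Measure.map (fun ω => ⨆ A : 𝒜, |empMeas X ω ↑A - (μ ↑A).toReal|)
        (ProbabilityTheory.cond P {ω | rareCount X 𝔸 ω = k}) =
      Measure.map (fun ω => ⨆ A : 𝒜, |((k : ℝ) / n) * empMeasFirst Y k ω ↑A - (μ ↑A).toReal|)
        P :=
  conditioning_trick_general P μ X Y hXmeas hYmeas 𝔸 h𝔸meas hp hXlaw hYlaw hindep 𝒜 h𝒜meas h𝒜pm h𝔸 k
    hkn hk
end
end

section
/- Rademacher–Hoeffding step: fix k ≥ 1 and points y_1,…,y_k, y_1',…,y_k' ∈ ℝ^d, and let σ_1,…,σ_k be independent Rademacher random variables (P(σ_i = 1) = P(σ_i = −1) = 1/2). Then for every u > 0, P( sup_{A ∈ 𝒜} Σ_{i=1}^k σ_i·(1{y_i ∈ A} − 1{y_i' ∈ A}) ≥ u ) ≤ S_𝒜(2k)·exp( − u² / (2k) ). -/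
open MeasureTheory ProbabilityTheory Set Filter
open scoped ENNReal NNReal BigOperators Topology

noncomputable section

/-!
The sum `∑ᵢ σᵢ (1{yᵢ ∈ A} − 1{yᵢ' ∈ A})` depends on `A` only through the signed trace vector
`c(A) ∈ {-1, 0, 1}^k`, which is determined by the trace of `A` on the `2k` points `yᵢ, yᵢ'`; so
`c(A)` takes at most `S_𝒜(2k)` values, and the supremum reaches `u` only if one of these
finitely many sums does. A Rademacher variable is `1`-sub-Gaussian (`cosh t ≤ exp (t²/2)`),
so for each fixed `c` with `|cᵢ| ≤ 1` Hoeffding's inequality bounds `P(∑ᵢ σᵢ cᵢ ≥ u)` by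
`exp(−u²/(2k))`; a union bound over the values of `c(A)` finishes the proof.
-/

def rademacherMeasure : Measure ℝ :=
  (2⁻¹ : ℝ≥0∞) • Measure.dirac (1 : ℝ) + (2⁻¹ : ℝ≥0∞) • Measure.dirac (-1 : ℝ)

lemma integrable_half_dirac {f : ℝ → ℝ} (hf : Measurable f) (a : ℝ) :
    Integrable f ((2⁻¹ : ℝ≥0∞) • Measure.dirac a) :=
  (integrable_dirac' hf.stronglyMeasurable (by simp)).smul_measure (by simp)

lemma integrable_rademacherMeasure {f : ℝ → ℝ} (hf : Measurable f) :
    Integrable f rademacherMeasure :=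
  (integrable_half_dirac hf 1).add_measure (integrable_half_dirac hf (-1))

lemma integral_rademacherMeasure {f : ℝ → ℝ} (hf : Measurable f) :
    ∫ x, f x ∂rademacherMeasure = (f 1 + f (-1)) / 2 := by
  rw [rademacherMeasure, integral_add_measure (integrable_half_dirac hf 1)
    (integrable_half_dirac hf (-1)), integral_smul_measure, integral_smul_measure,
    integral_dirac, integral_dirac]
  simp only [ENNReal.toReal_inv, ENNReal.toReal_ofNat, smul_eq_mul]
  ring

lemma hasSubgaussianMGF_id_rademacherMeasure :
    HasSubgaussianMGF id 1 rademacherMeasure where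
  integrable_exp_mul t := integrable_rademacherMeasure (by fun_prop)
  mgf_le t := by
    rw [mgf, integral_rademacherMeasure (by fun_prop), NNReal.coe_one, one_mul]
    simpa [Real.cosh_eq] using Real.cosh_le_exp_half_sq t

lemma hasSubgaussianMGF_of_map_eq_rademacherMeasure {Ω : Type*} [MeasurableSpace Ω]
    {P : Measure Ω} {σ : Ω → ℝ} (hσ : Measurable σ) (hlaw : P.map σ = rademacherMeasure) :
    HasSubgaussianMGF σ 1 P :=
  (HasSubgaussianMGF.id_map_iff hσ.aemeasurable).mp
    (hlaw ▸ hasSubgaussianMGF_id_rademacherMeasure)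

namespace ProbabilityTheory.HasSubgaussianMGF

variable {Ω : Type*} [MeasurableSpace Ω] {μ : Measure Ω} {X : Ω → ℝ}

lemma mono {c c' : ℝ≥0} (h : HasSubgaussianMGF X c μ) (hc : c ≤ c') :
    HasSubgaussianMGF X c' μ where
  integrable_exp_mul := h.integrable_exp_mul
  mgf_le t := (h.mgf_le t).trans (Real.exp_le_exp.mpr (by gcongr))

lemma mul_const_of_abs_le_one (h : HasSubgaussianMGF X 1 μ) {c : ℝ} (hc : |c| ≤ 1) :
    HasSubgaussianMGF (fun ω => X ω * c) 1 μ := by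
  simp_rw [mul_comm _ c]
  refine (h.const_mul c).mono (NNReal.coe_le_coe.mp ?_)
  change c ^ 2 * 1 ≤ 1
  rw [mul_one, ← sq_abs]
  exact pow_le_one₀ (abs_nonneg c) hc

end ProbabilityTheory.HasSubgaussianMGF

lemma measure_sum_mul_ge_le_of_iIndepFun {Ω ι : Type*} [MeasurableSpace Ω] [Fintype ι]
    {P : Measure Ω} [IsFiniteMeasure P] {σ : ι → Ω → ℝ} (hindep : iIndepFun σ P)
    (hσ : ∀ i, HasSubgaussianMGF (σ i) 1 P) {c : ι → ℝ} (hc : ∀ i, |c i| ≤ 1) {u : ℝ}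
    (hu : 0 ≤ u) :
    P {ω | u ≤ ∑ i, σ i ω * c i} ≤
      ENNReal.ofReal (Real.exp (-u ^ 2 / (2 * Fintype.card ι))) := by
  have hsum := HasSubgaussianMGF.measure_sum_ge_le_of_iIndepFun
    (hindep.comp (fun i x => x * c i) (fun i => measurable_mul_const _))
    (fun i _ => (hσ i).mul_const_of_abs_le_one (hc i)) hu (s := Finset.univ)
  rw [← ofReal_measureReal]
  refine ENNReal.ofReal_le_ofReal (hsum.trans_eq ?_)
  simp

lemma image_inter_range_subset_range_image {ι E : Type*} (𝒜 : Set (Set E)) (x : ι → E) :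
    (fun A => A ∩ range x) '' 𝒜 ⊆ range (image x) := by
  rintro _ ⟨A, -, rfl⟩
  exact ⟨x ⁻¹' A, image_preimage_eq_inter_range⟩

lemma finite_image_inter_range {ι E : Type*} [Finite ι] (𝒜 : Set (Set E)) (x : ι → E) :
    ((fun A => A ∩ range x) '' 𝒜).Finite :=
  (finite_range _).subset (image_inter_range_subset_range_image 𝒜 x)

lemma ncard_image_inter_range_le_natCard {ι E : Type*} [Finite ι] (𝒜 : Set (Set E))
    (x : ι → E) : ((fun A => A ∩ range x) '' 𝒜).ncard ≤ Nat.card (Set ι) :=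
  calc ((fun A => A ∩ range x) '' 𝒜).ncard
      ≤ (image x '' univ).ncard := by
        rw [image_univ]
        exact ncard_le_ncard (image_inter_range_subset_range_image 𝒜 x) (finite_range _)
    _ ≤ (univ : Set (Set ι)).ncard := ncard_image_le
    _ = Nat.card (Set ι) := ncard_univ _

lemma ncard_image_inter_range_le_shatterCoeff {d m : ℕ} (𝒜 : Set (Set (Fin d → ℝ)))
    (x : Fin m → (Fin d → ℝ)) : ((fun A => A ∩ range x) '' 𝒜).ncard ≤ shatterCoeff 𝒜 m :=
  le_ciSup (f := fun x : Fin m → (Fin d → ℝ) => ((fun A => A ∩ range x) '' 𝒜).ncard)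
    ⟨Nat.card (Set (Fin m)), forall_mem_range.mpr (ncard_image_inter_range_le_natCard 𝒜)⟩ x

lemma exists_range_subset_of_fin_two_mul {E : Type*} {k : ℕ} (y y' : Fin k → E) :
    ∃ x : Fin (2 * k) → E, range y ⊆ range x ∧ range y' ⊆ range x := by
  refine ⟨Fin.append y y' ∘ Fin.cast (two_mul k), ?_, ?_⟩
  · rintro _ ⟨i, rfl⟩
    exact ⟨Fin.cast (two_mul k).symm (Fin.castAdd k i), by simp⟩
  · rintro _ ⟨i, rfl⟩
    exact ⟨Fin.cast (two_mul k).symm (Fin.natAdd k i), by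
      simp only [Function.comp_apply, Fin.cast_cast, Fin.cast_eq_self, Fin.append_right]⟩

def signedTrace {E : Type*} {k : ℕ} (y y' : Fin k → E) (A : Set E) : Fin k → ℝ :=
  fun i => A.indicator (fun _ => (1 : ℝ)) (y i) - A.indicator (fun _ => (1 : ℝ)) (y' i)

section signedTrace

variable {E : Type*} {k : ℕ} (y y' : Fin k → E)

lemma abs_signedTrace_le_one (A : Set E) (i : Fin k) : |signedTrace y y' A i| ≤ 1 := by
  by_cases h : y i ∈ A <;> by_cases h' : y' i ∈ A <;> simp [signedTrace, h, h']

lemma signedTrace_inter_of_range_subset {S : Set E} (hy : range y ⊆ S) (hy' : range y' ⊆ S)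
    (A : Set E) : signedTrace y y' (A ∩ S) = signedTrace y y' A := by
  ext i
  have hyi : y i ∈ S := hy (mem_range_self i)
  have hyi' : y' i ∈ S := hy' (mem_range_self i)
  classical
  simp only [signedTrace, indicator_apply, mem_inter_iff, hyi, hyi', and_true]

lemma image_signedTrace_eq_image_inter {S : Set E} (hy : range y ⊆ S) (hy' : range y' ⊆ S)
    (𝒜 : Set (Set E)) :
    signedTrace y y' '' 𝒜 = signedTrace y y' '' ((fun A => A ∩ S) '' 𝒜) := by
  rw [image_image]
  exact image_congr fun A _ => (signedTrace_inter_of_range_subset y y' hy hy' A).symm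

end signedTrace

section shatterCoeff

variable {d k : ℕ} (y y' : Fin k → (Fin d → ℝ)) (𝒜 : Set (Set (Fin d → ℝ)))

lemma finite_image_signedTrace : (signedTrace y y' '' 𝒜).Finite := by
  obtain ⟨x, hy, hy'⟩ := exists_range_subset_of_fin_two_mul y y'
  rw [image_signedTrace_eq_image_inter y y' hy hy']
  exact (finite_image_inter_range 𝒜 x).image _

lemma ncard_image_signedTrace_le_shatterCoeff :
    (signedTrace y y' '' 𝒜).ncard ≤ shatterCoeff 𝒜 (2 * k) := by
  obtain ⟨x, hy, hy'⟩ := exists_range_subset_of_fin_two_mul y y'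
  rw [image_signedTrace_eq_image_inter y y' hy hy']
  exact (ncard_image_le (finite_image_inter_range 𝒜 x)).trans
    (ncard_image_inter_range_le_shatterCoeff 𝒜 x)

end shatterCoeff

lemma exists_le_of_le_iSup_of_finite_range {ι : Type*} {f : ι → ℝ} (hf : (range f).Finite)
    {u : ℝ} (hu : 0 < u) (h : u ≤ ⨆ i, f i) : ∃ i, u ≤ f i := by
  rcases isEmpty_or_nonempty ι with hι | hι
  -- `⨆` over an empty type is the junk value `0` in `ℝ`, hence the hypothesis `0 < u`.
  · rw [Real.iSup_of_isEmpty] at h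
    exact absurd h (not_le.mpr hu)
  · obtain ⟨i, hi⟩ := (range_nonempty f).csSup_mem hf
    exact ⟨i, h.trans_eq hi.symm⟩

lemma setOf_le_iSup_subset_biUnion {Ω α ι : Type*} [Fintype ι] (σ : ι → Ω → ℝ)
    (v : α → ι → ℝ) {s : Set α} (hs : (v '' s).Finite) {u : ℝ} (hu : 0 < u) :
    {ω | u ≤ ⨆ a : s, ∑ i, σ i ω * v a i} ⊆ ⋃ c ∈ v '' s, {ω | u ≤ ∑ i, σ i ω * c i} := by
  intro ω hω
  have hfin : (range fun a : s => ∑ i, σ i ω * v a i).Finite := by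
    refine (hs.image fun c => ∑ i, σ i ω * c i).subset ?_
    rintro _ ⟨a, rfl⟩
    exact ⟨v a, mem_image_of_mem v a.2, rfl⟩
  obtain ⟨a, ha⟩ := exists_le_of_le_iSup_of_finite_range hfin hu hω
  exact mem_biUnion (mem_image_of_mem v a.2) ha

lemma measure_biUnion_le_ncard_mul {α ι : Type*} [MeasurableSpace α] (μ : Measure α)
    {I : Set ι} (hI : I.Finite) (s : ι → Set α) {b : ℝ≥0∞} (h : ∀ i ∈ I, μ (s i) ≤ b) :
    μ (⋃ i ∈ I, s i) ≤ I.ncard * b :=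
  calc μ (⋃ i ∈ I, s i) = μ (⋃ i ∈ hI.toFinset, s i) := by simp
    _ ≤ ∑ i ∈ hI.toFinset, μ (s i) := measure_biUnion_finset_le _ _
    _ ≤ ∑ _i ∈ hI.toFinset, b := Finset.sum_le_sum fun i hi => h i (hI.mem_toFinset.mp hi)
    _ = I.ncard * b := by rw [Finset.sum_const, nsmul_eq_mul, ncard_eq_toFinset_card I hI]

theorem rademacher_hoeffding_step_general
    {Ω : Type*} [MeasurableSpace Ω] (P : Measure Ω) [IsProbabilityMeasure P]
    {d k : ℕ}
    (y y' : Fin k → (Fin d → ℝ))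
    (σ : Fin k → Ω → ℝ) (hσmeas : ∀ i, Measurable (σ i))
    (hσindep : iIndepFun σ P)
    (hσlaw : ∀ i, Measure.map (σ i) P =
      (2⁻¹ : ℝ≥0∞) • Measure.dirac (1 : ℝ) + (2⁻¹ : ℝ≥0∞) • Measure.dirac (-1 : ℝ))
    (𝒜 : Set (Set (Fin d → ℝ))) :
    ∀ u : ℝ, 0 < u →
      P {ω | u ≤ ⨆ A : 𝒜, ∑ i : Fin k, σ i ω *
          ((↑A : Set (Fin d → ℝ)).indicator (fun _ => (1:ℝ)) (y i) -
            (↑A : Set (Fin d → ℝ)).indicator (fun _ => (1:ℝ)) (y' i))} ≤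
        ENNReal.ofReal ((shatterCoeff 𝒜 (2 * k) : ℝ) *
          Real.exp (-u ^ 2 / (2 * k))) := by
  intro u hu
  have hV := finite_image_signedTrace y y' 𝒜
  have hσ i := hasSubgaussianMGF_of_map_eq_rademacherMeasure (hσmeas i) (hσlaw i)
  calc _ ≤ P (⋃ c ∈ signedTrace y y' '' 𝒜, {ω | u ≤ ∑ i, σ i ω * c i}) :=
        measure_mono (setOf_le_iSup_subset_biUnion σ (signedTrace y y') hV hu)
    _ ≤ (signedTrace y y' '' 𝒜).ncard * ENNReal.ofReal (Real.exp (-u ^ 2 / (2 * k))) := by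
        refine measure_biUnion_le_ncard_mul P hV _ ?_
        rintro _ ⟨A, -, rfl⟩
        simpa using measure_sum_mul_ge_le_of_iIndepFun hσindep hσ
          (abs_signedTrace_le_one y y' A) hu.le
    _ ≤ shatterCoeff 𝒜 (2 * k) * ENNReal.ofReal (Real.exp (-u ^ 2 / (2 * k))) := by
        gcongr
        exact ncard_image_signedTrace_le_shatterCoeff y y' 𝒜
    _ = _ := by rw [ENNReal.ofReal_mul (by positivity), ENNReal.ofReal_natCast]

/-- **Rademacher–Hoeffding step.** For fixed points `y₁, …, y_k, y₁', …, y_k'` and independent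
Rademacher variables `σ₁, …, σ_k`, for every `u > 0`,
`P(sup_{A ∈ 𝒜} Σᵢ σᵢ (1{yᵢ ∈ A} − 1{yᵢ' ∈ A}) ≥ u) ≤ S_𝒜(2k) exp(−u²/(2k))`. -/
theorem rademacher_hoeffding_step
    {Ω : Type*} [MeasurableSpace Ω] (P : Measure Ω) [IsProbabilityMeasure P]
    {d k : ℕ} (hk : 1 ≤ k)
    (y y' : Fin k → (Fin d → ℝ))
    (σ : Fin k → Ω → ℝ) (hσmeas : ∀ i, Measurable (σ i))
    (hσindep : iIndepFun σ P)
    (hσlaw : ∀ i, Measure.map (σ i) P =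
      (2⁻¹ : ℝ≥0∞) • Measure.dirac (1 : ℝ) + (2⁻¹ : ℝ≥0∞) • Measure.dirac (-1 : ℝ))
    (𝒜 : Set (Set (Fin d → ℝ))) (h𝒜ne : 𝒜.Nonempty)
    (h𝒜meas : ∀ A ∈ 𝒜, MeasurableSet A) (h𝒜pm : PointwiseMeasurable 𝒜) :
    ∀ u : ℝ, 0 < u →
      P {ω | u ≤ ⨆ A : 𝒜, ∑ i : Fin k, σ i ω *
          ((↑A : Set (Fin d → ℝ)).indicator (fun _ => (1:ℝ)) (y i) -
            (↑A : Set (Fin d → ℝ)).indicator (fun _ => (1:ℝ)) (y' i))} ≤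
        ENNReal.ofReal ((shatterCoeff 𝒜 (2 * k) : ℝ) *
          Real.exp (-u ^ 2 / (2 * k))) :=
  rademacher_hoeffding_step_general P y y' σ hσmeas hσindep hσlaw 𝒜
end
end
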